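/- arXiv:2404.13230 — 9 statements merged into one kernel-verified Lean document; each statement's English description precedes it below -/
import Mathlib

section
/- Let A_1, ..., A_m and B_1, ..., B_m be linear subspaces of F^n over a field F. Then dim(⋂_{i=1}^m (A_i + B_i)) ≤ dim(⋂_{i=1}^m A_i) + ∑_{i=1}^m dim(B_i). -/
/-!
The dimension formula gives `dim (C ∩ (A + B)) ≤ dim (C ∩ A) + dim B` for any third subspace `C`:
`C ∩ (A + B)` meets `A` in `C ∩ A` and spans with it a subspace of `A + B`. Carrying such a `C`
through an induction on the number of pairs, each step moves `A i + B i` into `C` and then trades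
it for `A i` at the cost of `dim B i`.
-/

open Module

namespace Submodule

variable {K V : Type*} [DivisionRing K] [AddCommGroup V] [Module K V] [FiniteDimensional K V]

theorem finrank_inf_sup_le (C A B : Submodule K V) :
    finrank K ↥(C ⊓ (A ⊔ B)) ≤ finrank K ↥(C ⊓ A) + finrank K ↥B := by
  have hmeet : C ⊓ (A ⊔ B) ⊓ A = C ⊓ A := by
    rw [inf_assoc, inf_eq_right.mpr (le_sup_left : A ≤ A ⊔ B)]
  have hjoin : finrank K ↥(C ⊓ (A ⊔ B) ⊔ A) ≤ finrank K ↥(A ⊔ B) :=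
    finrank_mono (sup_le inf_le_right le_sup_left)
  have hsum := finrank_sup_add_finrank_inf_eq (C ⊓ (A ⊔ B)) A
  rw [hmeet] at hsum
  have := finrank_add_le_finrank_add_finrank A B
  omega

theorem finrank_inf_biInf_sup_le {ι : Type*} (C : Submodule K V) (A B : ι → Submodule K V)
    (s : Finset ι) :
    finrank K ↥(C ⊓ ⨅ i ∈ s, (A i ⊔ B i)) ≤
      finrank K ↥(C ⊓ ⨅ i ∈ s, A i) + ∑ i ∈ s, finrank K ↥(B i) := by
  classical
  induction s using Finset.induction_on generalizing C with
  | empty => exact (finrank_mono (by simp)).trans (Nat.le_add_right _ _)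
  | @insert a s ha ih =>
    calc finrank K ↥(C ⊓ ⨅ i ∈ insert a s, (A i ⊔ B i))
        = finrank K ↥(C ⊓ (A a ⊔ B a) ⊓ ⨅ i ∈ s, (A i ⊔ B i)) := by
          rw [Finset.iInf_insert, inf_assoc]
      _ ≤ finrank K ↥(C ⊓ (A a ⊔ B a) ⊓ ⨅ i ∈ s, A i) + ∑ i ∈ s, finrank K ↥(B i) := ih _
      _ = finrank K ↥((C ⊓ ⨅ i ∈ s, A i) ⊓ (A a ⊔ B a)) + ∑ i ∈ s, finrank K ↥(B i) := by
          rw [inf_right_comm]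
      _ ≤ finrank K ↥((C ⊓ ⨅ i ∈ s, A i) ⊓ A a) + finrank K ↥(B a) +
            ∑ i ∈ s, finrank K ↥(B i) := by
          gcongr; exact finrank_inf_sup_le _ _ _
      _ = finrank K ↥(C ⊓ ⨅ i ∈ insert a s, A i) + ∑ i ∈ insert a s, finrank K ↥(B i) := by
          rw [Finset.iInf_insert, Finset.sum_insert ha, inf_right_comm, inf_assoc, add_assoc]

end Submodule

/-- For subspaces `A_1, …, A_m` and `B_1, …, B_m` of `F^n`,
`dim (⋂ᵢ (Aᵢ + Bᵢ)) ≤ dim (⋂ᵢ Aᵢ) + ∑ᵢ dim Bᵢ`. -/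
theorem finrank_iInf_sup_le {F : Type*} [Field F] {n m : ℕ}
    (A B : Fin m → Submodule F (Fin n → F)) :
    Module.finrank F ↥(⨅ i, (A i ⊔ B i)) ≤
      Module.finrank F ↥(⨅ i, A i) + ∑ i, Module.finrank F ↥(B i) := by
  have huniv : ∀ C : Fin m → Submodule F (Fin n → F), ⊤ ⊓ ⨅ i ∈ Finset.univ, C i = ⨅ i, C i := by
    simp
  have h := Submodule.finrank_inf_biInf_sup_le ⊤ A B Finset.univ
  rwa [huniv, huniv] at h
end

section
/- Let C ⊆ F^n be a k-dimensional linear code over an extension field F of F_q with generator matrix G ∈ F^{k×n}. Then the following are equivalent: (1) C is MRD, i.e., every nonzero codeword v satisfies rank_{F_q}(v) ≥ n - k + 1; (2) for every full-rank matrix A ∈ F_q^{n×k}, the matrix GA ∈ F^{k×k} is invertible; (3) for every k' ≤ k and every full-rank A' ∈ F_q^{n×k'}, the matrix GA' ∈ F^{k×k'} has rank k'. -/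
/-!
Write `φ_v : F_qⁿ → F`, `a ↦ ∑ aᵢ vᵢ`, so that `rank_{F_q} v = n - dim ker φ_v`. For a matrix `A`
over `F_q`, the columns of `A` lie in `ker φ_v` exactly when `v A = 0`. Hence a nonzero codeword
`x G` of rank at most `n - k` is the same thing as a full-rank `A ∈ F_q^{n×k}` with `x (G A) = 0`,
i.e. with `G A` singular. For the third condition, a full-rank `A'` with `k' ≤ k` columns extends
to a full-rank `A` with `k` columns, and `G A'` consists of columns of the invertible `G A`.
-/

open Module Submodule Matrix

theorem LinearIndependent.exists_extend_fin {K V : Type*} [DivisionRing K] [AddCommGroup V]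
    [Module K V] {r s : ℕ} {c : Fin r → V} (hc : LinearIndependent K c) (hrs : r ≤ s)
    (hs : s ≤ finrank K V) :
    ∃ b : Fin s → V, LinearIndependent K b ∧ b ∘ Fin.castLE hrs = c := by
  induction s, hrs using Nat.le_induction with
  | base => exact ⟨c, hc, rfl⟩
  | succ s hrs ih =>
    obtain ⟨b, hb, rfl⟩ := ih (Nat.le_of_succ_le hs)
    obtain ⟨x, hx⟩ := exists_linearIndependent_snoc_of_lt_finrank hb hs
    exact ⟨Fin.snoc b x, hx,
      funext fun i => Fin.snoc_castSucc (α := fun _ => V) x b (Fin.castLE hrs i)⟩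

theorem Submodule.exists_linearIndependent_fin_mem_iff {K V : Type*} [DivisionRing K]
    [AddCommGroup V] [Module K V] (W : Submodule K V) [FiniteDimensional K W] {r : ℕ} :
    (∃ b : Fin r → V, LinearIndependent K b ∧ ∀ j, b j ∈ W) ↔ r ≤ finrank K W := by
  constructor
  · rintro ⟨b, hb, hbW⟩
    have hbW' : LinearIndependent K fun j => (⟨b j, hbW j⟩ : W) := hb.of_comp W.subtype
    simpa using hbW'.fintype_card_le_finrank
  · intro h
    obtain ⟨b, hb⟩ := exists_linearIndependent_of_le_finrank h
    exact ⟨W.subtype ∘ b, hb.map' W.subtype W.ker_subtype, fun j => (b j).2⟩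

namespace Matrix

variable {R : Type*} [Field R] {m n : Type*} [Fintype n]

theorem rank_eq_card_iff_linearIndependent_col {A : Matrix m n R} :
    A.rank = Fintype.card n ↔ LinearIndependent R A.col := by
  rw [linearIndependent_iff_card_eq_finrank_span, rank_eq_finrank_span_cols, Set.finrank, eq_comm]

theorem rank_submatrix_id_of_isUnit {p : Type*} [Fintype p] [DecidableEq n] {M : Matrix n n R}
    (hM : IsUnit M) {f : p → n} (hf : Function.Injective f) :
    (M.submatrix id f).rank = Fintype.card p :=
  rank_eq_card_iff_linearIndependent_col.2 <| (linearIndependent_cols_iff_isUnit.2 hM).comp f hf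

theorem exists_rank_eq_submatrix_eq [Fintype m] {r s : ℕ} (A' : Matrix m (Fin r) R)
    (hA' : A'.rank = r) (hrs : r ≤ s) (hs : s ≤ Fintype.card m) :
    ∃ A : Matrix m (Fin s) R, A.rank = s ∧ A.submatrix id (Fin.castLE hrs) = A' := by
  have hcol := rank_eq_card_iff_linearIndependent_col.1 (hA'.trans (Fintype.card_fin r).symm)
  obtain ⟨b, hb, hbA'⟩ := hcol.exists_extend_fin hrs (by rwa [finrank_fintype_fun_eq_card])
  refine ⟨(of b)ᵀ, (rank_eq_card_iff_linearIndependent_col.2 hb).trans (Fintype.card_fin s), ?_⟩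
  ext i j
  exact congr_fun (congr_fun hbA' j) i

end Matrix

section

variable {K L ι : Type*} [Fintype ι]

theorem finrank_span_range_add_finrank_ker_linearCombination [Field K] [Field L] [Algebra K L]
    (v : ι → L) :
    finrank K (span K (Set.range v)) +
      finrank K (LinearMap.ker (Fintype.linearCombination K v)) = Fintype.card ι := by
  rw [← Fintype.range_linearCombination, LinearMap.finrank_range_add_finrank_ker,
    finrank_fintype_fun_eq_card]

theorem vecMul_map_algebraMap_eq_zero_iff [CommSemiring K] [CommSemiring L] [Algebra K L]
    {p : Type*} (v : ι → L) (A : Matrix ι p K) :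
    v ᵥ* A.map (algebraMap K L) = 0 ↔
      ∀ j, A.col j ∈ LinearMap.ker (Fintype.linearCombination K v) := by
  simp [funext_iff, Fintype.linearCombination_apply, vecMul, dotProduct, Algebra.smul_def,
    mul_comm]

theorem exists_rank_eq_vecMul_map_algebraMap_eq_zero_iff [Field K] [Field L] [Algebra K L]
    (v : ι → L) {r : ℕ} :
    (∃ A : Matrix ι (Fin r) K, A.rank = r ∧ v ᵥ* A.map (algebraMap K L) = 0) ↔
      r + finrank K (span K (Set.range v)) ≤ Fintype.card ι := by
  rw [← finrank_span_range_add_finrank_ker_linearCombination (K := K) v, add_comm,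
    add_le_add_iff_left, ← exists_linearIndependent_fin_mem_iff]
  constructor
  · rintro ⟨A, hA, hvA⟩
    exact ⟨A.col, rank_eq_card_iff_linearIndependent_col.1 (hA.trans (Fintype.card_fin r).symm),
      (vecMul_map_algebraMap_eq_zero_iff v A).1 hvA⟩
  · rintro ⟨b, hb, hbW⟩
    exact ⟨(of b)ᵀ, (rank_eq_card_iff_linearIndependent_col.2 hb).trans (Fintype.card_fin r),
      (vecMul_map_algebraMap_eq_zero_iff v _).2 hbW⟩

end

/-- Let `C ⊆ F^n` be the `k`-dimensional linear code over an extension field `F` of `F_q`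
with generator matrix `G ∈ F^{k×n}` (whose rows are linearly independent), i.e. `C` is the
row space of `G`.  Then the following are equivalent:
1. `C` is MRD: every nonzero codeword `v` satisfies `rank_{F_q}(v) ≥ n - k + 1`;
2. for every full-rank `A ∈ F_q^{n×k}`, the matrix `G * A ∈ F^{k×k}` is invertible;
3. for every `k' ≤ k` and every full-rank `A' ∈ F_q^{n×k'}`, `G * A'` has rank `k'`. -/
theorem mrd_tfae {Fq F : Type*} [Field Fq] [Field F] [Algebra Fq F] {k n : ℕ}
    (G : Matrix (Fin k) (Fin n) F) (hG : LinearIndependent F (fun i => G i)) :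
    [ (∀ v ∈ LinearMap.range G.vecMulLinear, v ≠ 0 →
        n - k + 1 ≤ Module.finrank Fq ↥(Submodule.span Fq (Set.range v))),
      (∀ A : Matrix (Fin n) (Fin k) Fq, A.rank = k →
        (G * A.map (algebraMap Fq F)).det ≠ 0),
      (∀ k' : ℕ, k' ≤ k → ∀ A' : Matrix (Fin n) (Fin k') Fq, A'.rank = k' →
        (G * A'.map (algebraMap Fq F)).rank = k') ].TFAE := by
  have hkn : k ≤ n := by simpa using hG.fintype_card_le_finrank
  tfae_have 1 → 2 := by
    intro h1 A hA hdet
    obtain ⟨x, hx0, hx⟩ := exists_vecMul_eq_zero_iff.2 hdet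
    have hv0 : x ᵥ* G ≠ 0 := by simpa using (vecMul_injective_iff.2 hG).ne hx0
    have hrank := (exists_rank_eq_vecMul_map_algebraMap_eq_zero_iff (x ᵥ* G)).1
      ⟨A, hA, by rwa [vecMul_vecMul]⟩
    have := h1 (x ᵥ* G) ⟨x, rfl⟩ hv0
    simp only [Fintype.card_fin] at hrank
    omega
  tfae_have 2 → 1 := by
    rintro h2 _ ⟨x, rfl⟩ hv0
    by_contra! hrank
    obtain ⟨A, hA, hvA⟩ := (exists_rank_eq_vecMul_map_algebraMap_eq_zero_iff (K := Fq)
      (vecMulLinear G x) (r := k)).2 (by rw [Fintype.card_fin]; omega)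
    have hx0 : x = 0 := eq_zero_of_vecMul_eq_zero (h2 A hA) (by rwa [← vecMul_vecMul])
    exact hv0 (by simp [hx0])
  tfae_have 2 → 3 := by
    intro h2 k' hk' A' hA'
    obtain ⟨A, hA, rfl⟩ := exists_rank_eq_submatrix_eq A' hA' hk' (by simpa using hkn)
    have hU : IsUnit (G * A.map (algebraMap Fq F)) := by
      rw [isUnit_iff_isUnit_det, isUnit_iff_ne_zero]
      exact h2 A hA
    rw [← submatrix_map, ← submatrix_id_id G, ← submatrix_mul _ _ _ _ _ Function.bijective_id]
    simpa using rank_submatrix_id_of_isUnit hU (Fin.castLE_injective hk')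
  tfae_have 3 → 2 := by
    intro h3 A hA
    have hcol : LinearIndependent F (G * A.map (algebraMap Fq F)).col :=
      rank_eq_card_iff_linearIndependent_col.1 (by simpa using h3 k le_rfl A hA)
    rw [← isUnit_iff_ne_zero, ← isUnit_iff_isUnit_det]
    exact linearIndependent_cols_iff_isUnit.1 hcol
  tfae_finish
end

section
/- Let C be an [n,k] linear code over an extension field F of F_q. If C is MRD (every nonzero codeword has F_q-rank at least n-k+1), then the dual code C^⊥ is also MRD (every nonzero codeword of C^⊥ has F_q-rank at least k+1). -/
/-- The linear functional `w ↦ ∑ i, w i * u i` given by dotting with a fixed vector `u`. -/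
noncomputable def dotFunctional {F : Type*} [Field F] {n : ℕ} (u : Fin n → F) :
    (Fin n → F) →ₗ[F] F :=
  ∑ i, u i • (LinearMap.proj i : (Fin n → F) →ₗ[F] F)

/-- The dual code `C^⊥ = {u ∈ F^n : ∑ i, u i * v i = 0 for all v ∈ C}`. -/
noncomputable def dualCode {F : Type*} [Field F] {n : ℕ} (C : Submodule F (Fin n → F)) :
    Submodule F (Fin n → F) :=
  ⨅ v ∈ C, LinearMap.ker (dotFunctional v)

/-! If `u ∈ C^⊥` had `F_q`-rank `r ≤ k`, the `F_q`-linear relations `∑ xᵢ uᵢ = 0` with `x ∈ F_qⁿ`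
would form a space of dimension `n - r ≥ n - k`; take `n - k` independent ones as the columns of
a matrix `M`. Their `F`-span, the range of `w ↦ M w`, has dimension `n - k`, and each `M w` has
rank at most `n - k` because its coordinates are `F_q`-combinations of the entries of `w`. By the
MRD property it meets `C` trivially, so together with `C` it spans `Fⁿ`. Both are orthogonal to
`u`, hence `u = 0`. -/

namespace Matrix

variable {m n K L : Type*} [Fintype n] [Field K]

theorem mulVec_map_injective [Fintype m] [Semiring L] (f : K →+* L) {M : Matrix m n K}
    (hM : Function.Injective M.mulVec) : Function.Injective (M.map f).mulVec := by
  obtain ⟨ℓ, hℓ⟩ := LinearMap.exists_leftInverse_of_injective M.mulVecLin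
    (LinearMap.ker_eq_bot.2 hM)
  classical
  have hPM : (LinearMap.toMatrix' ℓ).map f * M.map f = 1 := by
    rw [← Matrix.map_mul, ← LinearMap.toMatrix'_toLin' M, ← LinearMap.toMatrix'_comp,
      toLin'_apply', hℓ, LinearMap.toMatrix'_id, Matrix.map_one f f.map_zero f.map_one]
  refine Function.LeftInverse.injective (g := ((LinearMap.toMatrix' ℓ).map f).mulVec) fun w => ?_
  rw [mulVec_mulVec, hPM, one_mulVec]

variable [CommRing L] [Algebra K L]

theorem map_algebraMap_mulVec_apply (M : Matrix m n K) (w : n → L) (i : m) :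
    (M.map (algebraMap K L) *ᵥ w) i = Fintype.linearCombination K w (M i) := by
  simp [mulVec, dotProduct, Fintype.linearCombination_apply, Algebra.smul_def, mul_comm]

theorem finrank_span_range_map_algebraMap_mulVec_le (M : Matrix m n K) (w : n → L) :
    Module.finrank K (Submodule.span K (Set.range (M.map (algebraMap K L) *ᵥ w))) ≤
      Fintype.card n := by
  have hspan : Submodule.span K (Set.range (M.map (algebraMap K L) *ᵥ w)) ≤
      Submodule.span K (Set.range w) := by
    rw [Submodule.span_le, Set.range_subset_iff]
    intro i
    rw [map_algebraMap_mulVec_apply, ← Fintype.range_linearCombination]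
    exact LinearMap.mem_range_self _ _
  have := FiniteDimensional.span_of_finite K (Set.finite_range w)
  exact (Submodule.finrank_mono hspan).trans (finrank_range_le_card w)

theorem dotProduct_map_algebraMap_mulVec_eq_zero [Fintype m] {u : m → L} {M : Matrix m n K}
    (hM : ∀ j, Fintype.linearCombination K u (M.col j) = 0) (w : n → L) :
    u ⬝ᵥ (M.map (algebraMap K L) *ᵥ w) = 0 := by
  have hu : Mᵀ.map (algebraMap K L) *ᵥ u = 0 := funext fun j => by
    rw [map_algebraMap_mulVec_apply]; exact hM j
  rw [dotProduct_mulVec, ← mulVec_transpose, ← transpose_map, hu, zero_dotProduct]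

end Matrix

theorem finrank_ker_fintypeLinearCombination {K L ι : Type*} [Field K] [AddCommGroup L]
    [Module K L] [Fintype ι] (u : ι → L) :
    Module.finrank K (LinearMap.ker (Fintype.linearCombination K u)) =
      Fintype.card ι - Module.finrank K (Submodule.span K (Set.range u)) := by
  have h := (Fintype.linearCombination K u).finrank_range_add_finrank_ker
  rw [Fintype.range_linearCombination, Module.finrank_fintype_fun_eq_card] at h
  omega

section DualCode

variable {F : Type*} [Field F] {n : ℕ}

theorem dotFunctional_apply (u w : Fin n → F) :
    dotFunctional u w = u ⬝ᵥ w := by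
  simp [dotFunctional, dotProduct]

theorem le_ker_dotFunctional_of_mem_dualCode {C : Submodule F (Fin n → F)} {u : Fin n → F} (hu : u ∈ dualCode C) :
    C ≤ LinearMap.ker (dotFunctional u) := fun v hv => by
  have hvu : dotFunctional v u = 0 := by
    simp only [dualCode, Submodule.mem_iInf] at hu
    exact hu v hv
  rwa [LinearMap.mem_ker, dotFunctional_apply, dotProduct_comm, ← dotFunctional_apply]

theorem eq_zero_of_ker_dotFunctional_eq_top {u : Fin n → F}
    (hu : LinearMap.ker (dotFunctional u) = ⊤) : u = 0 :=
  dotProduct_eq_zero_iff.1 fun w => by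
    rw [← dotFunctional_apply, ← LinearMap.mem_ker, hu]; exact Submodule.mem_top

end DualCode

/-- If an `[n,k]` linear code `C` over an extension field `F` of `F_q` is MRD
(every nonzero codeword has `F_q`-rank at least `n - k + 1`), then its dual code `C^⊥`
is also MRD (every nonzero codeword of `C^⊥` has `F_q`-rank at least `k + 1`). -/
theorem dual_of_mrd_is_mrd {Fq F : Type*} [Field Fq] [Field F] [Algebra Fq F] {n k : ℕ}
    (C : Submodule F (Fin n → F)) (hC : Module.finrank F ↥C = k)
    (hMRD : ∀ v ∈ C, v ≠ 0 →
      n - k + 1 ≤ Module.finrank Fq ↥(Submodule.span Fq (Set.range v))) :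
    ∀ u ∈ dualCode C, u ≠ 0 →
      k + 1 ≤ Module.finrank Fq ↥(Submodule.span Fq (Set.range u)) := by
  intro u hu hu0
  by_contra! hrank
  set T := Fintype.linearCombination Fq u
  obtain ⟨a, ha⟩ := exists_linearIndependent_of_le_finrank (R := Fq) (M := LinearMap.ker T)
    (n := n - k) (by rw [finrank_ker_fintypeLinearCombination, Fintype.card_fin]; omega)
  let M : Matrix (Fin n) (Fin (n - k)) Fq := Matrix.of fun i j => (a j : Fin n → Fq) i
  let A := (M.map (algebraMap Fq F)).mulVecLin
  have hA : Function.Injective A := Matrix.mulVec_map_injective _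
    (Matrix.mulVec_injective_iff.2 (ha.map' _ (LinearMap.ker T).ker_subtype))
  have hdisj : Disjoint C (LinearMap.range A) := by
    rw [Submodule.disjoint_def]
    rintro _ hvC ⟨w, rfl⟩
    by_contra hv0
    have hup := M.finrank_span_range_map_algebraMap_mulVec_le w
    rw [Fintype.card_fin] at hup
    have := (hMRD _ hvC hv0).trans hup
    omega
  have htop : C ⊔ LinearMap.range A = ⊤ := Submodule.eq_top_of_disjoint _ _
    (by rw [hC, LinearMap.finrank_range_of_inj hA]; simp only [Module.finrank_fin_fun]; omega) hdisj
  refine hu0 (eq_zero_of_ker_dotFunctional_eq_top (top_le_iff.1 ?_))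
  rw [← htop]
  refine sup_le (le_ker_dotFunctional_of_mem_dualCode hu) ?_
  rintro _ ⟨w, rfl⟩
  rw [LinearMap.mem_ker, dotFunctional_apply]
  exact Matrix.dotProduct_map_algebraMap_mulVec_eq_zero (fun j => (a j).2) w
end

section
/- Let n ≥ k ≥ 0 and let V_1, ..., V_k be subspaces of F_q^n such that dim(∑_{i∈Ω} V_i) ≥ n - k + |Ω| for every nonempty Ω ⊆ [k]. Then there exist subspaces V'_i ⊆ V_i for i = 1,...,k such that dim(∑_{i∈Ω} V'_i) ≥ n - k + |Ω| for every nonempty Ω ⊆ [k], and dim V'_i = n - k + 1 for all i ∈ [k]. -/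
/-!
Induct on the family `V`, ordered pointwise by inclusion (a well-founded order). If some `V i`
has dimension at least `d + 2` (where `d = n - k`), call `Ω` tight when equality holds in the
Hall condition. By submodularity of `Ω ↦ dim ∑_{j ∈ Ω} V j`, the tight sets containing `i` are
closed under intersection, so there is a least one, `Ω₀`; it is not `{i}`, and counting
dimensions shows that `V i` meets `∑_{j ∈ Ω₀ \ {i}} V j` in a nonzero vector `x`. Replacing `V i`
by a complement `W` of `⟨x⟩` in `V i` leaves the sum over every tight set unchanged and lowers
any other sum by at most one, so the Hall condition survives.
-/

open Module Submodule Finset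

namespace Finset

variable {α β : Type*} [DecidableEq α] [SemilatticeSup β] [OrderBot β]

theorem sup_sup_erase (s : Finset α) (f : α → β) {a : α} (h : a ∈ s) :
    f a ⊔ (s.erase a).sup f = s.sup f := by
  rw [← sup_insert, insert_erase h]

theorem sup_update_of_notMem {s : Finset α} {i : α} (h : i ∉ s) (f : α → β) (b : β) :
    s.sup (Function.update f i b) = s.sup f :=
  sup_congr rfl fun _ hj ↦ Function.update_of_ne (ne_of_mem_of_not_mem hj h) _ _

theorem sup_update_of_mem {s : Finset α} {i : α} (h : i ∈ s) (f : α → β) (b : β) :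
    s.sup (Function.update f i b) = b ⊔ (s.erase i).sup f := by
  rw [← sup_sup_erase s _ h, Function.update_self, sup_update_of_notMem (notMem_erase i s)]

end Finset

section

variable {K M : Type*} [DivisionRing K] [AddCommGroup M] [Module K M]

theorem Submodule.exists_lt_sup_span_singleton_eq {A : Submodule K M} {x : M} (hxA : x ∈ A)
    (hx : x ≠ 0) :
    ∃ W < A, W ⊔ K ∙ x = A := by
  obtain ⟨C, hC⟩ := exists_isCompl (K ∙ x)
  have hxC : x ∉ C := fun hxC ↦
    hx <| (mem_bot K).1 <| hC.inf_eq_bot ▸ mem_inf.2 ⟨mem_span_singleton_self x, hxC⟩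
  refine ⟨C ⊓ A, SetLike.lt_iff_le_and_exists.2 ⟨inf_le_right, x, hxA, fun h ↦ hxC h.1⟩, ?_⟩
  rw [sup_comm, ← sup_inf_assoc_of_le C ((span_singleton_le_iff_mem x A).2 hxA), hC.sup_eq_top,
    top_inf_eq]

variable [FiniteDimensional K M]

theorem Submodule.finrank_sup_span_singleton_sup_le (W S : Submodule K M) (x : M) :
    finrank K ↥(W ⊔ K ∙ x ⊔ S) ≤ finrank K ↥(W ⊔ S) + 1 :=
  calc finrank K ↥(W ⊔ K ∙ x ⊔ S) = finrank K ↥(W ⊔ S ⊔ K ∙ x) := by rw [sup_right_comm]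
    _ ≤ finrank K ↥(W ⊔ S) + finrank K ↥(K ∙ x) := finrank_add_le_finrank_add_finrank _ _
    _ ≤ finrank K ↥(W ⊔ S) + 1 := by
      gcongr
      simpa using finrank_span_le_card (R := K) ({x} : Set M)

variable {ι : Type*} [DecidableEq ι]

theorem finrank_sup_union_add_finrank_sup_inter_le (V : ι → Submodule K M) (s t : Finset ι) :
    finrank K ↥((s ∪ t).sup V) + finrank K ↥((s ∩ t).sup V) ≤
      finrank K ↥(s.sup V) + finrank K ↥(t.sup V) := by
  have hmod := finrank_sup_add_finrank_inf_eq (s.sup V) (t.sup V)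
  have hinter : finrank K ↥((s ∩ t).sup V) ≤ finrank K ↥(s.sup V ⊓ t.sup V) :=
    finrank_mono (le_inf (sup_mono inter_subset_left) (sup_mono inter_subset_right))
  rw [sup_union]
  omega

def HallCondition (d : ℕ) (V : ι → Submodule K M) : Prop :=
  ∀ Ω : Finset ι, Ω.Nonempty → d + #Ω ≤ finrank K ↥(Ω.sup V)

def IsTight (d : ℕ) (V : ι → Submodule K M) (Ω : Finset ι) : Prop :=
  finrank K ↥(Ω.sup V) = d + #Ω

namespace HallCondition

variable {d : ℕ} {V : ι → Submodule K M}

theorem isTight_inter (hV : HallCondition d V) {s t : Finset ι} (hs : IsTight d V s)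
    (ht : IsTight d V t) (hst : (s ∩ t).Nonempty) : IsTight d V (s ∩ t) := by
  have hunion := hV (s ∪ t) (hst.mono inter_subset_union)
  have hinter := hV (s ∩ t) hst
  have hsubmod := finrank_sup_union_add_finrank_sup_inter_le V s t
  have hcard := card_inter_add_card_union s t
  unfold IsTight at *
  omega

theorem exists_isLeast_isTight (hV : HallCondition d V) {i : ι}
    (htight : ∃ Ω, i ∈ Ω ∧ IsTight d V Ω) :
    ∃ Ω₀, IsLeast {Ω | i ∈ Ω ∧ IsTight d V Ω} Ω₀ := by
  obtain ⟨Ω₀, hmin⟩ := exists_minimal_of_wellFoundedLT _ htight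
  refine ⟨Ω₀, hmin.prop, fun Ω ⟨hi, hΩ⟩ ↦ ?_⟩
  have hi' : i ∈ Ω₀ ∩ Ω := mem_inter.2 ⟨hmin.prop.1, hi⟩
  exact (hmin.le_of_le ⟨hi', hV.isTight_inter hmin.prop.2 hΩ ⟨i, hi'⟩⟩ inter_subset_left).trans
    inter_subset_right

theorem exists_mem_sup_erase_of_isTight (hV : HallCondition d V) {i : ι}
    (hbig : d + 2 ≤ finrank K ↥(V i)) :
    ∃ x ∈ V i, x ≠ 0 ∧ ∀ Ω, i ∈ Ω → IsTight d V Ω → x ∈ (Ω.erase i).sup V := by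
  by_cases htight : ∃ Ω, i ∈ Ω ∧ IsTight d V Ω
  · obtain ⟨Ω₀, ⟨hi, hΩ₀⟩, hleast⟩ := hV.exists_isLeast_isTight htight
    have hne : (Ω₀.erase i).Nonempty := by
      refine nonempty_iff_ne_empty.2 fun he ↦ ?_
      obtain rfl : Ω₀ = {i} := ((erase_eq_empty_iff _ _).1 he).resolve_left (ne_empty_of_mem hi)
      rw [IsTight, Finset.sup_singleton, card_singleton] at hΩ₀
      omega
    have hrest := hV _ hne
    have hmod := finrank_sup_add_finrank_inf_eq (V i) ((Ω₀.erase i).sup V)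
    rw [sup_sup_erase _ _ hi] at hmod
    rw [IsTight] at hΩ₀
    have hcard := card_erase_add_one hi
    obtain ⟨x, hx, hx0⟩ := exists_mem_ne_zero_of_ne_bot
      ((one_le_finrank_iff (S := V i ⊓ (Ω₀.erase i).sup V)).1 (by omega))
    exact ⟨x, (Submodule.mem_inf.1 hx).1, hx0, fun Ω hiΩ hΩ ↦ SetLike.le_def.1
      (Finset.sup_mono (erase_subset_erase i (hleast ⟨hiΩ, hΩ⟩))) (Submodule.mem_inf.1 hx).2⟩
  · obtain ⟨x, hx, hx0⟩ :=
      exists_mem_ne_zero_of_ne_bot ((one_le_finrank_iff (S := V i)).1 (by omega))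
    exact ⟨x, hx, hx0, fun Ω hiΩ hΩ ↦ absurd ⟨Ω, hiΩ, hΩ⟩ htight⟩

theorem exists_lt_hallCondition_update (hV : HallCondition d V) {i : ι}
    (hbig : d + 2 ≤ finrank K ↥(V i)) :
    ∃ W < V i, HallCondition d (Function.update V i W) := by
  obtain ⟨x, hxV, hx0, hx⟩ := hV.exists_mem_sup_erase_of_isTight hbig
  obtain ⟨W, hWV, hWx⟩ := exists_lt_sup_span_singleton_eq hxV hx0
  refine ⟨W, hWV, fun Ω hΩ ↦ ?_⟩
  by_cases hi : i ∈ Ω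
  · have hsup : Ω.sup V = W ⊔ K ∙ x ⊔ (Ω.erase i).sup V := by
      rw [hWx, sup_sup_erase _ _ hi]
    rw [sup_update_of_mem hi]
    by_cases hΩt : IsTight d V Ω
    · have hxΩ : K ∙ x ≤ (Ω.erase i).sup V := (span_singleton_le_iff_mem _ _).2 (hx Ω hi hΩt)
      rw [sup_assoc, sup_eq_right.2 hxΩ] at hsup
      exact hsup ▸ hV Ω hΩ
    · have hdrop := finrank_sup_span_singleton_sup_le W ((Ω.erase i).sup V) x
      have hlb := hV Ω hΩ
      rw [IsTight] at hΩt
      rw [← hsup] at hdrop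
      omega
  · rw [sup_update_of_notMem hi]
    exact hV Ω hΩ

theorem exists_le_forall_finrank_eq [Finite ι] (hV : HallCondition d V) :
    ∃ V' ≤ V, HallCondition d V' ∧ ∀ i, finrank K ↥(V' i) = d + 1 := by
  induction V using WellFoundedLT.induction with
  | _ V ih =>
  by_cases hall : ∀ i, finrank K ↥(V i) = d + 1
  · exact ⟨V, le_rfl, hV, hall⟩
  push Not at hall
  obtain ⟨i, hi⟩ := hall
  have hbig : d + 2 ≤ finrank K ↥(V i) := by
    have := hV {i} (singleton_nonempty i)
    rw [Finset.sup_singleton, card_singleton] at this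
    omega
  obtain ⟨W, hWV, hW⟩ := hV.exists_lt_hallCondition_update hbig
  obtain ⟨V', hV'V, hV'⟩ := ih _ (update_lt_self_iff.2 hWV) hW
  exact ⟨V', hV'V.trans (update_le_self_iff.2 hWV.le), hV'⟩

end HallCondition

end

theorem hall_vector_spaces_general {Fq : Type*} [Field Fq] {n k : ℕ}
    (V : Fin k → Submodule Fq (Fin n → Fq))
    (h : ∀ Ω : Finset (Fin k), Ω.Nonempty →
      n - k + Ω.card ≤ Module.finrank Fq ↥(⨆ i ∈ Ω, V i)) :
    ∃ V' : Fin k → Submodule Fq (Fin n → Fq),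
      (∀ i, V' i ≤ V i) ∧
      (∀ Ω : Finset (Fin k), Ω.Nonempty →
        n - k + Ω.card ≤ Module.finrank Fq ↥(⨆ i ∈ Ω, V' i)) ∧
      (∀ i, Module.finrank Fq ↥(V' i) = n - k + 1) := by
  have hV : HallCondition (n - k) V := fun Ω hΩ ↦ Finset.sup_eq_iSup Ω V ▸ h Ω hΩ
  obtain ⟨V', hV'V, hV', hdim⟩ := hV.exists_le_forall_finrank_eq
  exact ⟨V', hV'V, fun Ω hΩ ↦ Finset.sup_eq_iSup Ω V' ▸ hV' Ω hΩ, hdim⟩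

/-- Hall's theorem for vector spaces: let `n ≥ k ≥ 0` and `V_1, …, V_k` be subspaces of
`F_q^n` with `dim (∑_{i ∈ Ω} V_i) ≥ n - k + |Ω|` for every nonempty `Ω ⊆ [k]`.  Then there
exist subspaces `V'_i ⊆ V_i` with the same property and with `dim V'_i = n - k + 1`. -/
theorem hall_vector_spaces {Fq : Type*} [Field Fq] {n k : ℕ} (hkn : k ≤ n)
    (V : Fin k → Submodule Fq (Fin n → Fq))
    (h : ∀ Ω : Finset (Fin k), Ω.Nonempty →
      n - k + Ω.card ≤ Module.finrank Fq ↥(⨆ i ∈ Ω, V i)) :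
    ∃ V' : Fin k → Submodule Fq (Fin n → Fq),
      (∀ i, V' i ≤ V i) ∧
      (∀ Ω : Finset (Fin k), Ω.Nonempty →
        n - k + Ω.card ≤ Module.finrank Fq ↥(⨆ i ∈ Ω, V' i)) ∧
      (∀ i, Module.finrank Fq ↥(V' i) = n - k + 1) :=
  hall_vector_spaces_general V h
end

section
/- Let n ≥ k ≥ 0, let V_1, ..., V_ℓ be subspaces of F_q^n, each of dimension at most k, and let δ_1, ..., δ_ℓ ≥ 0 be integers. Then the following are equivalent: (1) for every nonempty Ω ⊆ [ℓ], dim(⋂_{i∈Ω} V_i) ≤ k - ∑_{i∈Ω} δ_i; (2) the k-tuple consisting of δ_i copies of V_i for each i ∈ [ℓ] together with k - ∑_i δ_i copies of the zero subspace is a generic kernel pattern, i.e., for every nonempty subset Ω' of its index set, the dimension of the intersection of the corresponding subspaces is at most k - |Ω'|. -/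
/-!
A sub-multiset `S` of the pattern either contains the zero subspace, and then its intersection
is zero, or it consists of copies of the `V i` with `i` in `Ω = {i | V i ∈ S}`; then `|S|` is
at most `∑_{i ∈ Ω} δ i` while its intersection is `⋂_{i ∈ Ω} V i`, so (1) for `Ω` gives (2)
for `S`.
Conversely, (1) for `Ω` is (2) for the sub-multiset of all copies of the `V i`, `i ∈ Ω`, unless
this sub-multiset is empty, when (1) only asks `dim V i ≤ k`.
-/

open Module

namespace Multiset

variable {α ι : Type*}

theorem filter_replicate (p : α → Prop) [DecidablePred p] (n : ℕ) (a : α) :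
    filter p (replicate n a) = if p a then replicate n a else 0 := by
  split_ifs with h
  · exact filter_eq_self.2 fun b hb => eq_of_mem_replicate hb ▸ h
  · exact filter_eq_nil.2 fun b hb => eq_of_mem_replicate hb ▸ h

theorem filter_sum_replicate (p : α → Prop) [DecidablePred p] (s : Finset ι) (δ : ι → ℕ)
    (V : ι → α) :
    filter p (∑ i ∈ s, replicate (δ i) (V i)) = ∑ i ∈ s with p (V i), replicate (δ i) (V i) := by
  rw [Finset.sum_filter]
  exact (map_sum (⟨⟨filter p, filter_zero p⟩, filter_add p⟩ : Multiset α →+ Multiset α) _ s).trans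
    (Finset.sum_congr rfl fun i _ => filter_replicate p (δ i) (V i))

end Multiset

open Multiset

section CompleteLattice

variable {α ι : Type*} [CompleteLattice α]

theorem biInf_le_sInf_sum_replicate (s : Finset ι) (δ : ι → ℕ) (V : ι → α) :
    ⨅ i ∈ s, V i ≤ sInf {U | U ∈ ∑ i ∈ s, replicate (δ i) (V i)} := by
  refine le_sInf fun U hU => ?_
  obtain ⟨i, hi, hiU⟩ := mem_sum.1 hU
  exact eq_of_mem_replicate hiU ▸ iInf₂_le i hi

theorem le_sum_replicate_filter_mem [DecidableEq α] {s : Finset ι} {δ : ι → ℕ} {V : ι → α}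
    {m : ℕ} {S : Multiset α} (hS : S ≤ replicate m ⊥ + ∑ i ∈ s, replicate (δ i) (V i))
    (hbot : ⊥ ∉ S) : S ≤ ∑ i ∈ s with V i ∈ S, replicate (δ i) (V i) := by
  have hS' : S ≤ filter (· ∈ S) (replicate m ⊥ + ∑ i ∈ s, replicate (δ i) (V i)) :=
    le_filter.2 ⟨hS, fun _ => id⟩
  rwa [filter_add, filter_replicate, if_neg hbot, zero_add, filter_sum_replicate] at hS'

end CompleteLattice

section Submodule

variable {K M ι : Type*} [DivisionRing K] [AddCommGroup M] [Module K M] [FiniteDimensional K M]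
  [Fintype ι] {V : ι → Submodule K M} {δ : ι → ℕ} {k : ℕ}

theorem finrank_sInf_le_of_finrank_biInf_le [DecidableEq (Submodule K M)]
    (h : ∀ Ω : Finset ι, Ω.Nonempty →
      (finrank K ↥(⨅ i ∈ Ω, V i) : ℤ) ≤ (k : ℤ) - ∑ i ∈ Ω, (δ i : ℤ))
    {m : ℕ} {S : Multiset (Submodule K M)}
    (hS : S ≤ replicate m ⊥ + ∑ i, replicate (δ i) (V i)) (hS0 : S ≠ 0) :
    finrank K ↥(sInf {U | U ∈ S}) ≤ k - card S := by
  by_cases hbot : ⊥ ∈ S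
  · rw [le_bot_iff.1 (sInf_le (s := {U | U ∈ S}) hbot), finrank_bot]
    exact Nat.zero_le _
  set Ω := Finset.univ.filter (V · ∈ S)
  have hcard : card S ≤ ∑ i ∈ Ω, δ i := by
    simpa using card_le_card (le_sum_replicate_filter_mem hS hbot)
  have hΩ : Ω.Nonempty :=
    Finset.nonempty_of_sum_ne_zero (f := δ) (by have := card_pos.2 hS0; omega)
  have hmono : sInf {U | U ∈ S} ≤ ⨅ i ∈ Ω, V i :=
    le_iInf₂ fun i hi => sInf_le (Finset.mem_filter.1 hi).2
  have hΩbound := h Ω hΩ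
  have := Submodule.finrank_mono hmono
  rw [← Nat.cast_sum] at hΩbound
  omega

theorem finrank_biInf_le_of_finrank_sInf_le (hV : ∀ i, finrank K ↥(V i) ≤ k)
    (hδ : ∑ i, δ i ≤ k) {m : ℕ}
    (h : ∀ S : Multiset (Submodule K M), S ≤ replicate m ⊥ + ∑ i, replicate (δ i) (V i) →
      S ≠ 0 → finrank K ↥(sInf {U | U ∈ S}) ≤ k - card S)
    {Ω : Finset ι} (hΩ : Ω.Nonempty) :
    (finrank K ↥(⨅ i ∈ Ω, V i) : ℤ) ≤ (k : ℤ) - ∑ i ∈ Ω, (δ i : ℤ) := by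
  have hΩk : ∑ i ∈ Ω, δ i ≤ k := (Finset.sum_le_sum_of_subset Ω.subset_univ).trans hδ
  rw [← Nat.cast_sum]
  by_cases hzero : ∑ i ∈ Ω, δ i = 0
  · obtain ⟨i, hi⟩ := hΩ
    have := (Submodule.finrank_mono (iInf₂_le (f := fun i (_ : i ∈ Ω) => V i) i hi)).trans
      (hV i)
    omega
  have hmono := Submodule.finrank_mono (biInf_le_sInf_sum_replicate Ω δ V)
  have hcard : card (∑ i ∈ Ω, replicate (δ i) (V i)) = ∑ i ∈ Ω, δ i := by simp
  have hS : ∑ i ∈ Ω, replicate (δ i) (V i) ≤ replicate m ⊥ + ∑ i, replicate (δ i) (V i) :=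
    (Finset.sum_le_sum_of_subset Ω.subset_univ).trans (le_add_left _ _)
  have hbound := h _ hS (by rw [← card_pos]; omega)
  omega

end Submodule

theorem gkp_copies_iff_general {Fq : Type*} [Field Fq] {n k ℓ : ℕ}
    (V : Fin ℓ → Submodule Fq (Fin n → Fq))
    (hV : ∀ i, Module.finrank Fq ↥(V i) ≤ k)
    (δ : Fin ℓ → ℕ) (hδ : ∑ i, δ i ≤ k) :
    (∀ Ω : Finset (Fin ℓ), Ω.Nonempty →
        (Module.finrank Fq ↥(⨅ i ∈ Ω, V i) : ℤ) ≤ (k : ℤ) - ∑ i ∈ Ω, (δ i : ℤ)) ↔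
    (∀ S : Multiset (Submodule Fq (Fin n → Fq)),
        S ≤ Multiset.replicate (k - ∑ i, δ i) (⊥ : Submodule Fq (Fin n → Fq)) +
              ∑ i, Multiset.replicate (δ i) (V i) →
        S ≠ 0 →
        Module.finrank Fq ↥(sInf {U | U ∈ S}) ≤ k - Multiset.card S) := by
  classical
  exact ⟨fun h _ hS hS0 => finrank_sInf_le_of_finrank_biInf_le h hS hS0,
    fun h _ hΩ => finrank_biInf_le_of_finrank_sInf_le hV hδ h hΩ⟩

/-- Let `n ≥ k ≥ 0`, let `V_1, …, V_ℓ` be subspaces of `F_q^n` of dimension at most `k`,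
and let `δ_1, …, δ_ℓ ≥ 0` be integers with `∑ δ_i ≤ k`.  The following are equivalent:
1. for every nonempty `Ω ⊆ [ℓ]`, `dim (⋂_{i ∈ Ω} V_i) ≤ k - ∑_{i ∈ Ω} δ_i`;
2. the `k`-tuple consisting of `δ_i` copies of `V_i` together with `k - ∑ δ_i` copies of
the zero subspace is a generic kernel pattern.  (The tuple is encoded as the multiset
`(k - ∑ δ_i) • {⊥} + ∑ i, δ_i • {V_i}`; the generic-kernel-pattern condition says that for
every nonempty sub(multi)set `S` of positions, the dimension of the intersection of the
corresponding subspaces is at most `k - |S|`.) -/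
theorem gkp_copies_iff {Fq : Type*} [Field Fq] {n k ℓ : ℕ} (hkn : k ≤ n)
    (V : Fin ℓ → Submodule Fq (Fin n → Fq))
    (hV : ∀ i, Module.finrank Fq ↥(V i) ≤ k)
    (δ : Fin ℓ → ℕ) (hδ : ∑ i, δ i ≤ k) :
    (∀ Ω : Finset (Fin ℓ), Ω.Nonempty →
        (Module.finrank Fq ↥(⨅ i ∈ Ω, V i) : ℤ) ≤ (k : ℤ) - ∑ i ∈ Ω, (δ i : ℤ)) ↔
    (∀ S : Multiset (Submodule Fq (Fin n → Fq)),
        S ≤ Multiset.replicate (k - ∑ i, δ i) (⊥ : Submodule Fq (Fin n → Fq)) +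
              ∑ i, Multiset.replicate (δ i) (V i) →
        S ≠ 0 →
        Module.finrank Fq ↥(sInf {U | U ∈ S}) ≤ k - Multiset.card S) :=
  gkp_copies_iff_general V hV δ hδ
end

section
/- Let n ≥ k ≥ 0 and let V_1, ..., V_ℓ be subspaces of F_q^n, each of dimension at most k. Suppose there exist integers δ_1,...,δ_ℓ ≥ 0 such that for every nonempty Ω ⊆ [ℓ], dim(⋂_{i∈Ω} V_i) ≤ k - ∑_{i∈Ω} δ_i. Then there exist subspaces V'_i ⊇ V_i with dim V'_i = k - δ_i for each i, such that for every nonempty Ω ⊆ [ℓ] one still has dim(⋂_{i∈Ω} V'_i) ≤ k - ∑_{i∈Ω} δ_i. -/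
open Module Submodule

section HallAux

variable {Fq : Type*} [Field Fq] {n : ℕ}

private lemma hall_lemA (A B : Submodule Fq (Fin n → Fq)) (v : Fin n → Fq) :
    finrank Fq ↥(A ⊓ (B ⊔ span Fq {v})) ≤ finrank Fq ↥(A ⊓ B) + 1 := by
  have hC : finrank Fq ↥(span Fq {v} : Submodule Fq (Fin n → Fq)) ≤ 1 := by
    rcases eq_or_ne v 0 with rfl | hv
    · rw [Submodule.span_zero_singleton, finrank_bot]
      omega
    · rw [finrank_span_singleton hv]
  have e1 := Submodule.finrank_sup_add_finrank_inf_eq A (B ⊔ span Fq {v})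
  have e2 := Submodule.finrank_sup_add_finrank_inf_eq A B
  have e3 := Submodule.finrank_sup_add_finrank_inf_eq B (span Fq {v})
  have e4 : finrank Fq ↥(A ⊔ B) ≤ finrank Fq ↥(A ⊔ (B ⊔ span Fq {v})) :=
    Submodule.finrank_mono (sup_le_sup_left le_sup_left _)
  omega

private lemma hall_lemB {A B : Submodule Fq (Fin n → Fq)} {v : Fin n → Fq}
    (hv : v ∉ A ⊔ B) : A ⊓ (B ⊔ span Fq {v}) = A ⊓ B := by
  refine le_antisymm (fun x hx => ?_) (inf_le_inf_left A le_sup_left)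
  obtain ⟨hxA, hxB⟩ := Submodule.mem_inf.mp hx
  rw [Submodule.mem_sup] at hxB
  obtain ⟨b, hb, z, hz, hbz⟩ := hxB
  rw [Submodule.mem_span_singleton] at hz
  obtain ⟨c, rfl⟩ := hz
  rcases eq_or_ne c 0 with rfl | hc
  · refine Submodule.mem_inf.mpr ⟨hxA, ?_⟩
    have : b = x := by simpa using hbz
    exact this ▸ hb
  · exfalso
    apply hv
    have hxb : x - b ∈ A ⊔ B := sub_mem (Submodule.mem_sup_left hxA) (Submodule.mem_sup_right hb)
    have hcv : c • v = x - b := eq_sub_of_add_eq' hbz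
    have : v = c⁻¹ • (x - b) := by
      rw [← hcv, smul_smul, inv_mul_cancel₀ hc, one_smul]
    rw [this]
    exact Submodule.smul_mem _ _ hxb

private lemma hall_lemD {B : Submodule Fq (Fin n → Fq)} {v : Fin n → Fq} (hv : v ∉ B) :
    finrank Fq ↥(B ⊔ span Fq {v}) = finrank Fq ↥B + 1 := by
  have hv0 : v ≠ 0 := fun h => hv (h ▸ B.zero_mem)
  have hd : B ⊓ span Fq {v} = ⊥ := by
    rw [eq_bot_iff]
    intro x hx
    obtain ⟨hxB, hxs⟩ := Submodule.mem_inf.mp hx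
    rw [Submodule.mem_span_singleton] at hxs
    obtain ⟨c, rfl⟩ := hxs
    rcases eq_or_ne c 0 with rfl | hc
    · simp
    · exfalso
      apply hv
      have := B.smul_mem c⁻¹ hxB
      rwa [smul_smul, inv_mul_cancel₀ hc, one_smul] at this
  have e := Submodule.finrank_sup_add_finrank_inf_eq B (span Fq {v})
  rw [hd, finrank_span_singleton hv0] at e
  simpa using e

private lemma hall_step {k ℓ : ℕ} (hkn : k ≤ n) (V : Fin ℓ → Submodule Fq (Fin n → Fq))
    (δ : Fin ℓ → ℕ)
    (h : ∀ Ω : Finset (Fin ℓ), Ω.Nonempty →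
      (finrank Fq ↥(Ω.inf V) : ℤ) ≤ (k : ℤ) - ∑ i ∈ Ω, (δ i : ℤ))
    (j : Fin ℓ) (hj : (finrank Fq ↥(V j) : ℤ) < (k : ℤ) - δ j) :
    ∃ W : Submodule Fq (Fin n → Fq), V j ≤ W ∧
      finrank Fq ↥W = finrank Fq ↥(V j) + 1 ∧
      (∀ Ω : Finset (Fin ℓ), Ω.Nonempty →
        (finrank Fq ↥(Ω.inf (Function.update V j W)) : ℤ) ≤ (k : ℤ) - ∑ i ∈ Ω, (δ i : ℤ)) := by
  classical
  -- A subspace U avoiding which is safe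
  obtain ⟨U, hVjU, hUn, hU⟩ : ∃ U : Submodule Fq (Fin n → Fq), V j ≤ U ∧
      finrank Fq ↥U < n ∧ ∀ Ω : Finset (Fin ℓ), j ∈ Ω →
        (finrank Fq ↥(Ω.inf V) : ℤ) = (k : ℤ) - ∑ i ∈ Ω, (δ i : ℤ) →
        (Ω.erase j).inf V ≤ U := by
    by_cases hT : ∃ Ω : Finset (Fin ℓ), j ∈ Ω ∧
        (finrank Fq ↥(Ω.inf V) : ℤ) = (k : ℤ) - ∑ i ∈ Ω, (δ i : ℤ)
    · -- there is a tight set containing j; pick a minimal one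
      obtain ⟨Ω0, hΩ0, hmin⟩ := Finset.exists_min_image
        (Finset.univ.filter (fun Ω : Finset (Fin ℓ) => j ∈ Ω ∧
          (finrank Fq ↥(Ω.inf V) : ℤ) = (k : ℤ) - ∑ i ∈ Ω, (δ i : ℤ)))
        Finset.card (by obtain ⟨Ω, hΩ⟩ := hT; exact ⟨Ω, Finset.mem_filter.mpr ⟨Finset.mem_univ _, hΩ⟩⟩)
      obtain ⟨-, hjΩ0, htΩ0⟩ := Finset.mem_filter.mp hΩ0
      -- Ω0 ≠ {j}
      have herase : (Ω0.erase j).Nonempty := by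
        rw [Finset.nonempty_iff_ne_empty]
        intro he
        rcases (Finset.erase_eq_empty_iff Ω0 j).mp he with he' | he'
        · rw [he'] at hjΩ0; exact absurd hjΩ0 (Finset.notMem_empty j)
        · rw [he'] at htΩ0
          rw [Finset.inf_singleton, Finset.sum_singleton] at htΩ0
          omega
      refine ⟨(Ω0.erase j).inf V ⊔ V j, le_sup_right, ?_, ?_⟩
      · -- finrank bound
        have e := Submodule.finrank_sup_add_finrank_inf_eq ((Ω0.erase j).inf V) (V j)
        have hins : Ω0.inf V = V j ⊓ (Ω0.erase j).inf V := by
          conv_lhs => rw [← Finset.insert_erase hjΩ0]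
          rw [Finset.inf_insert]
        rw [inf_comm, ← hins] at e
        have h1 := h (Ω0.erase j) herase
        have h2 : ∑ i ∈ Ω0.erase j, (δ i : ℤ) + (δ j : ℤ) = ∑ i ∈ Ω0, (δ i : ℤ) :=
          Finset.sum_erase_add Ω0 _ hjΩ0
        omega
      · intro Ω hjΩ htΩ
        -- minimal tight set is contained in every tight set
        have hinter : Ω0 ⊆ Ω := by
          -- Ω0 ∩ Ω is tight
          have e := Submodule.finrank_sup_add_finrank_inf_eq (Ω0.inf V) (Ω.inf V)
          have hu : (Ω0 ∪ Ω).inf V = Ω0.inf V ⊓ Ω.inf V := Finset.inf_union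
          have hle : Ω0.inf V ⊔ Ω.inf V ≤ (Ω0 ∩ Ω).inf V :=
            sup_le (Finset.inf_mono Finset.inter_subset_left)
              (Finset.inf_mono Finset.inter_subset_right)
          have hle' : finrank Fq ↥(Ω0.inf V ⊔ Ω.inf V) ≤ finrank Fq ↥((Ω0 ∩ Ω).inf V) :=
            Submodule.finrank_mono hle
          have hbu := h (Ω0 ∪ Ω) ⟨j, Finset.mem_union_left _ hjΩ0⟩
          have hbi := h (Ω0 ∩ Ω) ⟨j, Finset.mem_inter_of_mem hjΩ0 hjΩ⟩
          have hsum : ∑ i ∈ Ω0 ∪ Ω, (δ i : ℤ) + ∑ i ∈ Ω0 ∩ Ω, (δ i : ℤ)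
              = ∑ i ∈ Ω0, (δ i : ℤ) + ∑ i ∈ Ω, (δ i : ℤ) := Finset.sum_union_inter
          rw [hu] at hbu
          have htight : (finrank Fq ↥((Ω0 ∩ Ω).inf V) : ℤ)
              = (k : ℤ) - ∑ i ∈ Ω0 ∩ Ω, (δ i : ℤ) := by omega
          have hmem : Ω0 ∩ Ω ∈ Finset.univ.filter (fun Ω' : Finset (Fin ℓ) => j ∈ Ω' ∧
              (finrank Fq ↥(Ω'.inf V) : ℤ) = (k : ℤ) - ∑ i ∈ Ω', (δ i : ℤ)) :=
            Finset.mem_filter.mpr ⟨Finset.mem_univ _,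
              Finset.mem_inter_of_mem hjΩ0 hjΩ, htight⟩
          have hcard := hmin _ hmem
          have := Finset.eq_of_subset_of_card_le Finset.inter_subset_left hcard
          exact Finset.inter_eq_left.mp this
        exact le_trans (Finset.inf_mono (Finset.erase_subset_erase _ hinter)) le_sup_left
    · -- no tight set containing j
      push_neg at hT
      refine ⟨V j, le_rfl, by omega, fun Ω hjΩ htΩ => absurd htΩ (hT Ω hjΩ)⟩
  -- pick v outside U
  have hUtop : U ≠ ⊤ := by
    intro hU'
    rw [hU', finrank_top, Module.finrank_fin_fun] at hUn
    exact lt_irrefl _ hUn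
  obtain ⟨v, hvU⟩ : ∃ v, v ∉ U := by
    by_contra hc
    push_neg at hc
    exact hUtop (Submodule.eq_top_iff'.mpr hc)
  have hvVj : v ∉ V j := fun hm => hvU (hVjU hm)
  refine ⟨V j ⊔ span Fq {v}, le_sup_left, hall_lemD hvVj, ?_⟩
  intro Ω hΩ
  by_cases hjΩ : j ∈ Ω
  · have h1 : Ω.inf (Function.update V j (V j ⊔ span Fq {v}))
        = (Ω.erase j).inf V ⊓ (V j ⊔ span Fq {v}) := by
      conv_lhs => rw [← Finset.insert_erase hjΩ]
      rw [Finset.inf_insert, Function.update_self, inf_comm]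
      congr 1
      exact Finset.inf_congr rfl fun i hi => Function.update_of_ne (Finset.ne_of_mem_erase hi) _ _
    have h2 : Ω.inf V = (Ω.erase j).inf V ⊓ V j := by
      conv_lhs => rw [← Finset.insert_erase hjΩ]
      rw [Finset.inf_insert, inf_comm]
    by_cases ht : (finrank Fq ↥(Ω.inf V) : ℤ) = (k : ℤ) - ∑ i ∈ Ω, (δ i : ℤ)
    · have hAU : (Ω.erase j).inf V ≤ U := hU Ω hjΩ ht
      have hvm : v ∉ (Ω.erase j).inf V ⊔ V j := fun hm => hvU ((sup_le hAU hVjU) hm)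
      rw [h1, hall_lemB hvm, ← h2]
      exact h Ω hΩ
    · have hlt : (finrank Fq ↥(Ω.inf V) : ℤ) < (k : ℤ) - ∑ i ∈ Ω, (δ i : ℤ) :=
        lt_of_le_of_ne (h Ω hΩ) ht
      have hA := hall_lemA ((Ω.erase j).inf V) (V j) v
      rw [← h2] at hA
      rw [h1]
      omega
  · have : Ω.inf (Function.update V j (V j ⊔ span Fq {v})) = Ω.inf V :=
      Finset.inf_congr rfl fun i hi => Function.update_of_ne (by rintro rfl; exact hjΩ hi) _ _
    rw [this]
    exact h Ω hΩ

private lemma hall_aux {k ℓ : ℕ} (hkn : k ≤ n) (δ : Fin ℓ → ℕ) :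
    ∀ (N : ℕ) (V : Fin ℓ → Submodule Fq (Fin n → Fq)),
      (∀ Ω : Finset (Fin ℓ), Ω.Nonempty →
        (finrank Fq ↥(Ω.inf V) : ℤ) ≤ (k : ℤ) - ∑ i ∈ Ω, (δ i : ℤ)) →
      (∑ i, (k - δ i - finrank Fq ↥(V i)) ≤ N) →
      ∃ V' : Fin ℓ → Submodule Fq (Fin n → Fq),
        (∀ i, V i ≤ V' i) ∧ (∀ i, (finrank Fq ↥(V' i) : ℤ) = (k : ℤ) - δ i) ∧
        (∀ Ω : Finset (Fin ℓ), Ω.Nonempty →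
          (finrank Fq ↥(Ω.inf V') : ℤ) ≤ (k : ℤ) - ∑ i ∈ Ω, (δ i : ℤ)) := by
  classical
  intro N
  induction N with
  | zero =>
    intro V h hm
    refine ⟨V, fun i => le_rfl, fun i => ?_, h⟩
    have hz : ∀ i ∈ Finset.univ, k - δ i - finrank Fq ↥(V i) = 0 :=
      Finset.sum_eq_zero_iff.mp (Nat.le_zero.mp hm)
    have hzi := hz i (Finset.mem_univ i)
    have hsi := h {i} ⟨i, Finset.mem_singleton_self i⟩
    rw [Finset.inf_singleton, Finset.sum_singleton] at hsi
    omega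
  | succ N ih =>
    intro V h hm
    by_cases hc : ∀ i, (finrank Fq ↥(V i) : ℤ) = (k : ℤ) - δ i
    · exact ⟨V, fun i => le_rfl, hc, h⟩
    · push_neg at hc
      obtain ⟨j, hj⟩ := hc
      have hsj := h {j} ⟨j, Finset.mem_singleton_self j⟩
      rw [Finset.inf_singleton, Finset.sum_singleton] at hsj
      have hjlt : (finrank Fq ↥(V j) : ℤ) < (k : ℤ) - δ j := lt_of_le_of_ne hsj hj
      obtain ⟨W, hVW, hrk, h'⟩ := hall_step hkn V δ h j hjlt
      have hmeas : ∑ i, (k - δ i - finrank Fq ↥(Function.update V j W i)) ≤ N := by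
        have e1 : (k - δ j - finrank Fq ↥(V j))
            + ∑ i ∈ Finset.univ.erase j, (k - δ i - finrank Fq ↥(V i))
            = ∑ i, (k - δ i - finrank Fq ↥(V i)) :=
          Finset.add_sum_erase Finset.univ (fun i => k - δ i - finrank Fq ↥(V i))
            (Finset.mem_univ j)
        have e2 : (k - δ j - finrank Fq ↥W)
            + ∑ i ∈ Finset.univ.erase j, (k - δ i - finrank Fq ↥(Function.update V j W i))
            = ∑ i, (k - δ i - finrank Fq ↥(Function.update V j W i)) := by
          have e2' : (k - δ j - finrank Fq ↥(Function.update V j W j))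
              + ∑ i ∈ Finset.univ.erase j, (k - δ i - finrank Fq ↥(Function.update V j W i))
              = ∑ i, (k - δ i - finrank Fq ↥(Function.update V j W i)) :=
            Finset.add_sum_erase Finset.univ
              (fun i => k - δ i - finrank Fq ↥(Function.update V j W i)) (Finset.mem_univ j)
          rwa [Function.update_self] at e2'
        have hsame : ∑ i ∈ Finset.univ.erase j, (k - δ i - finrank Fq ↥(Function.update V j W i))
            = ∑ i ∈ Finset.univ.erase j, (k - δ i - finrank Fq ↥(V i)) :=
          Finset.sum_congr rfl fun i hi => by
            rw [Function.update_of_ne (Finset.ne_of_mem_erase hi)]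
        rw [hsame] at e2
        omega
      obtain ⟨V', h1, h2, h3⟩ := ih (Function.update V j W) h' hmeas
      refine ⟨V', fun i => ?_, h2, h3⟩
      rcases eq_or_ne i j with rfl | hij
      · have := h1 i
        rw [Function.update_self] at this
        exact le_trans hVW this
      · have := h1 i
        rwa [Function.update_of_ne hij] at this

end HallAux

/-- Generalized Hall's theorem for vector spaces: let `n ≥ k ≥ 0`, `V_1, …, V_ℓ` subspaces
of `F_q^n` of dimension at most `k`, and `δ_1, …, δ_ℓ ≥ 0` integers with
`dim (⋂_{i ∈ Ω} V_i) ≤ k - ∑_{i ∈ Ω} δ_i` for every nonempty `Ω ⊆ [ℓ]`.  Then there exist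
subspaces `V'_i ⊇ V_i` with `dim V'_i = k - δ_i` satisfying the same inequalities. -/
theorem generalized_hall_vector_spaces {Fq : Type*} [Field Fq] {n k ℓ : ℕ} (hkn : k ≤ n)
    (V : Fin ℓ → Submodule Fq (Fin n → Fq))
    (hV : ∀ i, Module.finrank Fq ↥(V i) ≤ k)
    (δ : Fin ℓ → ℕ)
    (h : ∀ Ω : Finset (Fin ℓ), Ω.Nonempty →
      (Module.finrank Fq ↥(⨅ i ∈ Ω, V i) : ℤ) ≤ (k : ℤ) - ∑ i ∈ Ω, (δ i : ℤ)) :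
    ∃ V' : Fin ℓ → Submodule Fq (Fin n → Fq),
      (∀ i, V i ≤ V' i) ∧
      (∀ i, (Module.finrank Fq ↥(V' i) : ℤ) = (k : ℤ) - δ i) ∧
      (∀ Ω : Finset (Fin ℓ), Ω.Nonempty →
        (Module.finrank Fq ↥(⨅ i ∈ Ω, V' i) : ℤ) ≤ (k : ℤ) - ∑ i ∈ Ω, (δ i : ℤ)) := by
  have h' : ∀ Ω : Finset (Fin ℓ), Ω.Nonempty →
      (Module.finrank Fq ↥(Ω.inf V) : ℤ) ≤ (k : ℤ) - ∑ i ∈ Ω, (δ i : ℤ) := fun Ω hΩ => by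
    rw [Finset.inf_eq_iInf]; exact h Ω hΩ
  obtain ⟨V', h1, h2, h3⟩ := hall_aux hkn δ (∑ i, (k - δ i - Module.finrank Fq ↥(V i))) V h' le_rfl
  exact ⟨V', h1, h2, fun Ω hΩ => by rw [← Finset.inf_eq_iInf]; exact h3 Ω hΩ⟩
end

section
/- Let n ≥ k ≥ d ≥ 0 and let V_1, ..., V_ℓ be subspaces of F_q^n, each of dimension at most k. Then the following are equivalent: (a) there exist integers δ_1,...,δ_ℓ ≥ 0 with ∑_{i=1}^ℓ δ_i = k - d such that dim(⋂_{i∈Ω} V_i) ≤ k - ∑_{i∈Ω} δ_i for every nonempty Ω ⊆ [ℓ]; (b) for every partition P_1 ⊔ ... ⊔ P_s = [ℓ], ∑_{i=1}^s dim(⋂_{j∈P_i} V_j) ≤ (s-1)k + d. -/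
/-!
(a) ⇒ (b) is summation of the bounds over the blocks of a partition. For (b) ⇒ (a) put
`g Ω = k - dim ⋂_{i ∈ Ω} V_i`: it is nonnegative on nonempty sets (as `dim V_i ≤ k`) and
submodular (as `V_A + V_B ⊆ V_{A ∩ B}`), and (b) says that every partition of `[ℓ]` has
`g`-sum at least `k - d`. The weights `δ` are built one unit at a time: some `i₀` has
`g Ω > 0` for all `Ω ∋ i₀`, since otherwise the maximal sets with `g = 0`, being closed
under unions of intersecting pairs, would partition `[ℓ]` with `g`-sum `0`. Subtracting the
indicator of `Ω ∋ i₀` from `g` keeps all the hypotheses with `k - d` lowered by one.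
-/

open Finset

section Weights

variable {ι : Type*} [DecidableEq ι]

def IsIntersectingSubmodular (g : Finset ι → ℤ) : Prop :=
  ∀ A B : Finset ι, (A ∩ B).Nonempty → g (A ∪ B) + g (A ∩ B) ≤ g A + g B

lemma IsIntersectingSubmodular.sub_indicator {g : Finset ι → ℤ} (hg : IsIntersectingSubmodular g)
    (a : ι) : IsIntersectingSubmodular fun Ω => g Ω - if a ∈ Ω then 1 else 0 := by
  intro A B hAB
  have := hg A B hAB
  by_cases hA : a ∈ A <;> by_cases hB : a ∈ B <;>
    simp only [mem_union, mem_inter, hA, hB, or_self, or_true, or_false, and_self, and_true,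
      and_false, ↓reduceIte, sub_zero] <;> omega

lemma IsIntersectingSubmodular.union_eq_zero {g : Finset ι → ℤ}
    (hg : IsIntersectingSubmodular g) (hpos : ∀ Ω : Finset ι, Ω.Nonempty → 0 ≤ g Ω)
    {A B : Finset ι} (hA : g A = 0) (hB : g B = 0) (hAB : (A ∩ B).Nonempty) :
    g (A ∪ B) = 0 := by
  have := hg A B hAB
  have := hpos _ hAB
  have := hpos (A ∪ B) (hAB.mono (inter_subset_left.trans subset_union_left))
  omega

lemma Finpartition.sum_ite_mem_eq_one {M : Type*} [AddCommMonoidWithOne M] {s : Finset ι}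
    (P : Finpartition s) {a : ι} (ha : a ∈ s) :
    ∑ p ∈ P.parts, (if a ∈ p then 1 else 0 : M) = 1 := by
  rw [sum_eq_single_of_mem (P.part a) (P.part_mem.2 ha), if_pos (P.mem_part_self.2 ha)]
  intro p hp hne
  rw [if_neg fun hap => hne (P.part_eq_of_mem hp hap).symm]

lemma Finpartition.exists_fin_enum {M : Type*} [AddCommMonoid M] {s : Finset ι}
    (P : Finpartition s) (f : Finset ι → M) :
    ∃ Q : Fin #P.parts → Finset ι, (∀ t, (Q t).Nonempty) ∧ Pairwise (Function.onFun Disjoint Q) ∧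
      (∀ a ∈ s, ∃ t, a ∈ Q t) ∧ ∑ t, f (Q t) = ∑ p ∈ P.parts, f p := by
  set e := P.parts.equivFin
  refine ⟨fun t => e.symm t, fun t => P.nonempty_of_mem_parts (e.symm t).2,
    fun t t' htt' => P.disjoint (e.symm t).2 (e.symm t').2 ?_, fun a ha => ?_, ?_⟩
  · exact fun h => htt' (e.symm.injective (Subtype.ext h))
  · obtain ⟨p, hp, hap⟩ := P.exists_mem ha
    exact ⟨e ⟨p, hp⟩, by simpa using hap⟩
  · rw [← sum_coe_sort P.parts f]
    exact e.symm.sum_comp fun p => f p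

variable [Fintype ι] {g : Finset ι → ℤ}

lemma sum_le_sum_parts_of_sum_le {κ : Type*} [Fintype κ] {δ : ι → ℤ}
    (hδ : ∀ Ω : Finset ι, Ω.Nonempty → ∑ i ∈ Ω, δ i ≤ g Ω) (P : κ → Finset ι)
    (hne : ∀ t, (P t).Nonempty) (hdisj : Pairwise (Function.onFun Disjoint P))
    (hcover : ∀ i, ∃ t, i ∈ P t) : ∑ i, δ i ≤ ∑ t, g (P t) :=
  calc ∑ i, δ i = ∑ t, ∑ i ∈ P t, δ i := by
        rw [← sum_biUnion fun t _ t' _ h => hdisj h]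
        congr
        ext i
        simpa using hcover i
    _ ≤ ∑ t, g (P t) := sum_le_sum fun t _ => hδ (P t) (hne t)

lemma exists_finpartition_forall_eq_zero (hg : IsIntersectingSubmodular g)
    (hpos : ∀ Ω : Finset ι, Ω.Nonempty → 0 ≤ g Ω) (hcover : ∀ i, ∃ Ω, i ∈ Ω ∧ g Ω = 0) :
    ∃ P : Finpartition (univ : Finset ι), ∀ p ∈ P.parts, g p = 0 := by
  have hmax : ∀ i, ∃ Z : Finset ι, i ∈ Z ∧ g Z = 0 ∧ ∀ W, i ∈ W → g W = 0 → #W ≤ #Z := by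
    intro i
    obtain ⟨Ω, hiΩ, hΩ⟩ := hcover i
    obtain ⟨Z, hZ, hZmax⟩ :=
      exists_max_image {W : Finset ι | i ∈ W ∧ g W = 0} card ⟨Ω, by simp [hiΩ, hΩ]⟩
    simp only [mem_filter, mem_univ, true_and] at hZ hZmax
    exact ⟨Z, hZ.1, hZ.2, fun W hiW hW => hZmax W ⟨hiW, hW⟩⟩
  choose Z hmem hzero hcard using hmax
  have hZ_eq : ∀ i j, i ∈ Z j → Z j = Z i := by
    intro i j hij
    have hne : (Z i ∩ Z j).Nonempty := ⟨i, mem_inter.2 ⟨hmem i, hij⟩⟩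
    have hU := hg.union_eq_zero hpos (hzero i) (hzero j) hne
    have hi := eq_of_subset_of_card_le subset_union_left
      (hcard i _ (mem_union_left _ (hmem i)) hU)
    have hj := eq_of_subset_of_card_le subset_union_right
      (hcard j _ (mem_union_right _ (hmem j)) hU)
    exact hj.trans hi.symm
  have hunique : ∀ i ∈ univ, ∃! p, p ∈ univ.image Z ∧ i ∈ p := by
    refine fun i _ => ⟨Z i, ⟨mem_image_of_mem Z (mem_univ i), hmem i⟩, ?_⟩
    rintro _ ⟨hp, hip⟩
    obtain ⟨j, -, rfl⟩ := mem_image.1 hp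
    exact hZ_eq i j hip
  have hempty : ∅ ∉ univ.image Z := by
    simp only [mem_image, mem_univ, true_and, not_exists]
    exact fun i h => by simpa [h] using hmem i
  refine ⟨Finpartition.ofExistsUnique _ (fun _ _ => subset_univ _) hunique hempty, ?_⟩
  simp only [Finpartition.ofExistsUnique_parts, mem_image, mem_univ, true_and]
  rintro _ ⟨i, rfl⟩
  exact hzero i

lemma exists_forall_mem_pos (hg : IsIntersectingSubmodular g)
    (hpos : ∀ Ω : Finset ι, Ω.Nonempty → 0 ≤ g Ω)
    (hP : ∀ P : Finpartition (univ : Finset ι), 0 < ∑ p ∈ P.parts, g p) :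
    ∃ a, ∀ Ω, a ∈ Ω → 0 < g Ω := by
  by_contra! h
  obtain ⟨P, hP0⟩ := exists_finpartition_forall_eq_zero hg hpos fun i => by
    obtain ⟨Ω, hi, hΩ⟩ := h i
    exact ⟨Ω, hi, le_antisymm hΩ (hpos Ω ⟨i, hi⟩)⟩
  simpa [sum_eq_zero hP0] using hP P

theorem exists_weights_of_le_sum_parts (m : ℕ) (hg : IsIntersectingSubmodular g)
    (hpos : ∀ Ω : Finset ι, Ω.Nonempty → 0 ≤ g Ω)
    (hP : ∀ P : Finpartition (univ : Finset ι), (m : ℤ) ≤ ∑ p ∈ P.parts, g p) :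
    ∃ δ : ι → ℕ, ∑ i, δ i = m ∧ ∀ Ω : Finset ι, Ω.Nonempty → ∑ i ∈ Ω, (δ i : ℤ) ≤ g Ω := by
  induction m generalizing g with
  | zero => exact ⟨0, by simp, fun Ω hΩ => by simpa using hpos Ω hΩ⟩
  | succ m ih =>
    obtain ⟨a, ha⟩ := exists_forall_mem_pos hg hpos fun P => by
      have := hP P
      push_cast at this
      linarith
    obtain ⟨δ, hδsum, hδ⟩ := ih (hg.sub_indicator a)
      (fun Ω hΩ => by
        by_cases h : a ∈ Ω
        · have := ha Ω h
          simp only [h, if_true]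
          omega
        · simpa [h] using hpos Ω hΩ)
      (fun P => by
        have := P.sum_ite_mem_eq_one (M := ℤ) (mem_univ a)
        have hm := hP P
        push_cast at hm
        rw [sum_sub_distrib, this]
        linarith)
    refine ⟨fun i => δ i + if i = a then 1 else 0, ?_, fun Ω hΩ => ?_⟩
    · simp [sum_add_distrib, hδsum]
    · have := hδ Ω hΩ
      push_cast
      rw [sum_add_distrib, sum_ite_eq']
      linarith

end Weights

lemma Submodule.finrank_biInf_add_finrank_biInf_le {K M ι : Type*} [DivisionRing K]
    [AddCommGroup M] [Module K M] [FiniteDimensional K M] [DecidableEq ι]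
    (V : ι → Submodule K M) (A B : Finset ι) :
    Module.finrank K ↥(⨅ i ∈ A, V i) + Module.finrank K ↥(⨅ i ∈ B, V i) ≤
      Module.finrank K ↥(⨅ i ∈ A ∪ B, V i) + Module.finrank K ↥(⨅ i ∈ A ∩ B, V i) := by
  rw [Finset.iInf_union, ← finrank_sup_add_finrank_inf_eq, add_comm]
  gcongr
  exact Submodule.finrank_mono <|
    sup_le (biInf_mono fun _ => mem_of_mem_inter_left) (biInf_mono fun _ => mem_of_mem_inter_right)

lemma isIntersectingSubmodular_sub_finrank_biInf {K M ι : Type*} [DivisionRing K]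
    [AddCommGroup M] [Module K M] [FiniteDimensional K M] [DecidableEq ι]
    (k : ℤ) (V : ι → Submodule K M) :
    IsIntersectingSubmodular fun Ω : Finset ι => k - Module.finrank K ↥(⨅ i ∈ Ω, V i) :=
  fun A B _ => by
    have := Submodule.finrank_biInf_add_finrank_biInf_le V A B
    dsimp only
    omega

theorem gkp_order_le_ell_char_general {Fq : Type*} [Field Fq] {n k d ℓ : ℕ}
    (hdk : d ≤ k)
    (V : Fin ℓ → Submodule Fq (Fin n → Fq))
    (hV : ∀ i, Module.finrank Fq ↥(V i) ≤ k) :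
    (∃ δ : Fin ℓ → ℕ, ∑ i, δ i = k - d ∧
      ∀ Ω : Finset (Fin ℓ), Ω.Nonempty →
        (Module.finrank Fq ↥(⨅ i ∈ Ω, V i) : ℤ) ≤ (k : ℤ) - ∑ i ∈ Ω, (δ i : ℤ)) ↔
    (∀ (s : ℕ) (P : Fin s → Finset (Fin ℓ)),
      (∀ i, (P i).Nonempty) → Pairwise (Function.onFun Disjoint P) →
      (∀ j, ∃ i, j ∈ P i) →
      ∑ i, (Module.finrank Fq ↥(⨅ j ∈ P i, V j) : ℤ) ≤ ((s : ℤ) - 1) * k + d) := by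
  set g : Finset (Fin ℓ) → ℤ := fun Ω => k - Module.finrank Fq ↥(⨅ i ∈ Ω, V i)
  have sum_g {s : ℕ} (P : Fin s → Finset (Fin ℓ)) :
      ∑ t, g (P t) = s * k - ∑ t, (Module.finrank Fq ↥(⨅ j ∈ P t, V j) : ℤ) := by
    simp [g, sum_sub_distrib]
  have hkd : ((k - d : ℕ) : ℤ) = k - d := Nat.cast_sub hdk
  constructor
  · rintro ⟨δ, hδsum, hδ⟩ s P hne hdisj hcover
    have := sum_le_sum_parts_of_sum_le (g := g) (fun Ω hΩ => by linarith [hδ Ω hΩ])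
      P hne hdisj hcover
    rw [sum_g, ← Nat.cast_sum, hδsum, hkd] at this
    linarith
  · intro hb
    have hpos : ∀ Ω : Finset (Fin ℓ), Ω.Nonempty → 0 ≤ g Ω := fun Ω ⟨i, hi⟩ => by
      have hle : (⨅ j ∈ Ω, V j) ≤ V i := iInf₂_le i hi
      have := (Submodule.finrank_mono hle).trans (hV i)
      simp only [g]
      omega
    obtain ⟨δ, hδsum, hδ⟩ := exists_weights_of_le_sum_parts (k - d)
      (isIntersectingSubmodular_sub_finrank_biInf k V) hpos fun P => by
        obtain ⟨Q, hne, hdisj, hcover, hQ⟩ := P.exists_fin_enum g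
        have := hb _ Q hne hdisj fun j => hcover j (mem_univ j)
        rw [← hQ, sum_g, hkd]
        linarith
    exact ⟨δ, hδsum, fun Ω hΩ => by linarith [hδ Ω hΩ]⟩

/-- Characterization of generic kernel patterns of order at most `ℓ`:
let `n ≥ k ≥ d ≥ 0` and `V_1, …, V_ℓ` be subspaces of `F_q^n` of dimension at most `k`.
The following are equivalent:
(a) there exist integers `δ_1, …, δ_ℓ ≥ 0` with `∑ δ_i = k - d` and
    `dim (⋂_{i ∈ Ω} V_i) ≤ k - ∑_{i ∈ Ω} δ_i` for every nonempty `Ω ⊆ [ℓ]`;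
(b) for every partition `P_1 ⊔ ⋯ ⊔ P_s = [ℓ]`,
    `∑_{i} dim (⋂_{j ∈ P_i} V_j) ≤ (s - 1) k + d`. -/
theorem gkp_order_le_ell_char {Fq : Type*} [Field Fq] {n k d ℓ : ℕ}
    (hdk : d ≤ k) (hkn : k ≤ n)
    (V : Fin ℓ → Submodule Fq (Fin n → Fq))
    (hV : ∀ i, Module.finrank Fq ↥(V i) ≤ k) :
    (∃ δ : Fin ℓ → ℕ, ∑ i, δ i = k - d ∧
      ∀ Ω : Finset (Fin ℓ), Ω.Nonempty →
        (Module.finrank Fq ↥(⨅ i ∈ Ω, V i) : ℤ) ≤ (k : ℤ) - ∑ i ∈ Ω, (δ i : ℤ)) ↔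
    (∀ (s : ℕ) (P : Fin s → Finset (Fin ℓ)),
      (∀ i, (P i).Nonempty) → Pairwise (Function.onFun Disjoint P) →
      (∀ j, ∃ i, j ∈ P i) →
      ∑ i, (Module.finrank Fq ↥(⨅ j ∈ P i, V j) : ℤ) ≤ ((s : ℤ) - 1) * k + d) :=
  gkp_order_le_ell_char_general hdk V hV
end

section
/- Let F be an extension field of F_q, G ∈ F^{k×n}, and for i ∈ [ℓ] let V_i ⊆ F_q^n be a subspace with V_i = column span of A_i ∈ F_q^{n×dim V_i}. Let G_{V_i} ⊆ F^k denote the F-column span of G·A_i. Then dim_F(⋂_{i∈[ℓ]} G_{V_i}) = ∑_{i∈[ℓ]} dim_F G_{V_i} - rank(M), where M is the block matrix with ℓ-1 block rows, whose i-th block row is (GA_1, 0, ..., 0, GA_{i+1}, 0, ..., 0) — i.e., the block matrix whose rows are [GA_1 | GA_2 | 0 | ... ], [GA_1 | 0 | GA_3 | ...], ..., [GA_1 | 0 | ... | GA_ℓ]. -/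
/-!
The block matrix is the matrix of `x ↦ (B₀ x₀ + B_{p+1} x_{p+1})_p`, where `Bᵢ = G Aᵢ`. Its range
does not change when each `Bᵢ` is replaced by the inclusion of its column space, and once the
blocks are injective, `x ↦ B₀ x₀` identifies its kernel with `⋂ᵢ col Bᵢ`. Rank–nullity on
`∏ᵢ col Bᵢ` then gives `dim ⋂ᵢ col Bᵢ + rank M = ∑ᵢ dim col Bᵢ`.
-/

open Module

namespace LinearMap

variable {K W : Type*} [Field K] [AddCommGroup W] [Module K W] {m : ℕ}
  {V : Fin (m + 1) → Type*} [∀ i, AddCommGroup (V i)] [∀ i, Module K (V i)]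
  (f : ∀ i, V i →ₗ[K] W)

def pivotAdd : (∀ i, V i) →ₗ[K] (Fin m → W) :=
  LinearMap.pi fun p => f 0 ∘ₗ proj 0 + f p.succ ∘ₗ proj p.succ

@[simp] theorem pivotAdd_apply (x : ∀ i, V i) (p : Fin m) :
    pivotAdd f x p = f 0 (x 0) + f p.succ (x p.succ) := rfl

theorem mem_ker_pivotAdd {x : ∀ i, V i} :
    x ∈ ker (pivotAdd f) ↔ ∀ p : Fin m, f p.succ (x p.succ) = -f 0 (x 0) := by
  simp only [mem_ker, funext_iff, pivotAdd_apply, Pi.zero_apply, add_comm (f 0 _),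
    add_eq_zero_iff_eq_neg]

theorem range_comp_subtype_ker_pivotAdd :
    range (f 0 ∘ₗ proj 0 ∘ₗ (ker (pivotAdd f)).subtype) = ⨅ i, range (f i) := by
  apply le_antisymm
  · rintro _ ⟨⟨x, hx⟩, rfl⟩
    rw [mem_ker_pivotAdd] at hx
    refine Submodule.mem_iInf _ |>.2 fun i => i.cases ⟨x 0, rfl⟩ fun p => ⟨-x p.succ, ?_⟩
    simp [hx p]
  · intro y hy
    choose v hv using Submodule.mem_iInf _ |>.1 hy
    refine ⟨⟨Fin.cases (motive := V) (v 0) fun p => -v p.succ,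
      (mem_ker_pivotAdd f).2 fun p => ?_⟩, ?_⟩ <;> simp [hv]

theorem finrank_ker_pivotAdd_of_injective (hf : ∀ i, Function.Injective (f i)) :
    finrank K (ker (pivotAdd f)) = finrank K ↥(⨅ i, range (f i)) := by
  have hinj : Function.Injective (f 0 ∘ₗ proj 0 ∘ₗ (ker (pivotAdd f)).subtype) := by
    rw [← ker_eq_bot, Submodule.eq_bot_iff]
    rintro ⟨x, hx⟩ hx0
    rw [mem_ker_pivotAdd] at hx
    replace hx0 : f 0 (x 0) = 0 := hx0
    ext1
    funext i
    refine i.cases (hf 0 (by simpa using hx0)) fun p => hf p.succ ?_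
    simp [hx p, hx0]
  rw [(LinearEquiv.ofInjective _ hinj).finrank_eq, range_comp_subtype_ker_pivotAdd]

theorem range_pivotAdd_eq_range_pivotAdd_subtype :
    range (pivotAdd f) = range (pivotAdd fun i => (range (f i)).subtype) := by
  have hsurj : range (piMap fun i => (f i).rangeRestrict) = ⊤ :=
    range_eq_top.2 <| Function.Surjective.piMap fun i => (f i).surjective_rangeRestrict
  rw [← range_comp_of_range_eq_top _ hsurj]
  rfl

theorem finrank_iInf_range_add_finrank_range_pivotAdd [FiniteDimensional K W] :
    finrank K ↥(⨅ i, range (f i)) + finrank K (range (pivotAdd f)) =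
      ∑ i, finrank K (range (f i)) := by
  have h := finrank_range_add_finrank_ker (pivotAdd fun i => (range (f i)).subtype)
  rw [finrank_ker_pivotAdd_of_injective _ fun i => Submodule.subtype_injective _,
    finrank_pi_fintype] at h
  have hI : ⨅ i, range (range (f i)).subtype = ⨅ i, range (f i) := by
    simp only [Submodule.range_subtype]
  rw [hI] at h
  rw [range_pivotAdd_eq_range_pivotAdd_subtype]
  omega

end LinearMap

namespace Matrix

variable {F : Type*} [Field F] {k m : ℕ} {d : Fin (m + 1) → ℕ}

def pivotBlock (B : (i : Fin (m + 1)) → Matrix (Fin k) (Fin (d i)) F) :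
    Matrix (Fin m × Fin k) ((j : Fin (m + 1)) × Fin (d j)) F :=
  of fun p c => if (c.1 : ℕ) = 0 ∨ (c.1 : ℕ) = (p.1 : ℕ) + 1 then B c.1 p.2 c.2 else 0

theorem pivotBlock_mulVec (B : (i : Fin (m + 1)) → Matrix (Fin k) (Fin (d i)) F)
    (x : ((j : Fin (m + 1)) × Fin (d j)) → F) (p : Fin m) (r : Fin k) :
    (pivotBlock B *ᵥ x) (p, r) =
      (B 0 *ᵥ fun c => x ⟨0, c⟩) r + (B p.succ *ᵥ fun c => x ⟨p.succ, c⟩) r := by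
  simp [pivotBlock, mulVec, dotProduct, Fintype.sum_sigma, Fin.sum_univ_succ, ← Fin.ext_iff]

theorem rank_pivotBlock (B : (i : Fin (m + 1)) → Matrix (Fin k) (Fin (d i)) F) :
    (pivotBlock B).rank =
      finrank F (LinearMap.range (LinearMap.pivotAdd fun i => (B i).mulVecLin)) := by
  have hfactor : (pivotBlock B).mulVecLin =
      (LinearEquiv.curry F F (Fin m) (Fin k)).symm.toLinearMap ∘ₗ
        LinearMap.pivotAdd (fun i => (B i).mulVecLin) ∘ₗ
          (LinearEquiv.piCurry F fun j (_ : Fin (d j)) => F).toLinearMap :=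
    LinearMap.ext fun x => funext fun ⟨p, r⟩ => pivotBlock_mulVec B x p r
  rw [rank, hfactor, LinearMap.range_comp,
    LinearMap.range_comp_of_range_eq_top _ (LinearEquiv.range _), LinearEquiv.finrank_map_eq]

end Matrix

theorem dim_inter_eq_sum_dim_sub_rank_block_general {Fq F : Type*} [Field Fq] [Field F]
    [Algebra Fq F] {k n ℓ : ℕ} (hℓ : 1 ≤ ℓ) (d : Fin ℓ → ℕ)
    (G : Matrix (Fin k) (Fin n) F)
    (A : (i : Fin ℓ) → Matrix (Fin n) (Fin (d i)) Fq) :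
    (Module.finrank F
        ↥(⨅ i, LinearMap.range (G * (A i).map (algebraMap Fq F)).mulVecLin) : ℤ) =
      ∑ i, (Module.finrank F
          ↥(LinearMap.range (G * (A i).map (algebraMap Fq F)).mulVecLin) : ℤ) -
        (Matrix.rank (Matrix.of
          fun (p : Fin (ℓ - 1) × Fin k) (c : (j : Fin ℓ) × Fin (d j)) =>
            if (c.1 : ℕ) = 0 ∨ (c.1 : ℕ) = (p.1 : ℕ) + 1
            then (G * (A c.1).map (algebraMap Fq F)) p.2 c.2 else 0) : ℤ) := by
  obtain ⟨m, rfl⟩ := Nat.exists_eq_add_of_le' hℓ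
  have h := LinearMap.finrank_iInf_range_add_finrank_range_pivotAdd
    fun i => (G * (A i).map (algebraMap Fq F)).mulVecLin
  rw [← Matrix.rank_pivotBlock] at h
  rw [← Nat.cast_sum, ← h, Nat.cast_add]
  -- the matrix of the statement is `pivotBlock` once `m + 1 - 1` reduces to `m`
  exact (add_sub_cancel_right _ _).symm

/-- Let `F/F_q` be a field extension, `G ∈ F^{k×n}`, and for `i ∈ [ℓ]` let `A_i` be a
full-column-rank matrix over `F_q` with `n` rows and `d_i` columns (whose column span is
`V_i`), and let `G_{V_i} ⊆ F^k` be the `F`-column span of `G·A_i`.  Then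
`dim_F (⋂ᵢ G_{V_i}) = ∑ᵢ dim_F G_{V_i} - rank M`, where `M` is the block matrix with
`ℓ - 1` block rows whose `i`-th block row is `[G A_1 | 0 | ⋯ | G A_{i+1} | ⋯ | 0]`,
i.e. whose `(i, j)`-th block is `G A_j` if `j = 1` or `j = i + 1` and `0` otherwise. -/
theorem dim_inter_eq_sum_dim_sub_rank_block {Fq F : Type*} [Field Fq] [Field F]
    [Algebra Fq F] {k n ℓ : ℕ} (hℓ : 1 ≤ ℓ) (d : Fin ℓ → ℕ)
    (G : Matrix (Fin k) (Fin n) F)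
    (A : (i : Fin ℓ) → Matrix (Fin n) (Fin (d i)) Fq)
    (hA : ∀ i, (A i).rank = d i) :
    (Module.finrank F
        ↥(⨅ i, LinearMap.range (G * (A i).map (algebraMap Fq F)).mulVecLin) : ℤ) =
      ∑ i, (Module.finrank F
          ↥(LinearMap.range (G * (A i).map (algebraMap Fq F)).mulVecLin) : ℤ) -
        (Matrix.rank (Matrix.of
          fun (p : Fin (ℓ - 1) × Fin k) (c : (j : Fin ℓ) × Fin (d j)) =>
            if (c.1 : ℕ) = 0 ∨ (c.1 : ℕ) = (p.1 : ℕ) + 1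
            then (G * (A c.1).map (algebraMap Fq F)) p.2 c.2 else 0) : ℤ) :=
  dim_inter_eq_sum_dim_sub_rank_block_general hℓ d G A
end

section
/- Let 1 ≤ k ≤ n ≤ m, and let α_1, ..., α_n ∈ F_{q^m} be linearly independent over F_q. Then there exists a nonzero vector (β_1,...,β_n) ∈ F_{q^m}^n such that ∑_{i=1}^n α_i^{q^{j-1}} β_i^{q^{h-1}} = 0 for all j ∈ [k] and h ∈ [n-k]; moreover β_1, ..., β_n are linearly independent over F_q, and the Gabidulin code G_{n,n-k}(β_1,...,β_n) is the dual code of the Gabidulin code G_{n,k}(α_1,...,α_n). -/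
/-- The Gabidulin code `G_{n,k}(α_1, …, α_n)`: the `F`-row space of the Moore matrix
`(α_j^{q^{i-1}})_{i ∈ [k], j ∈ [n]}`, i.e. all evaluation vectors of `q`-linearized
polynomials `f(X) = ∑_{i=1}^k c_i X^{q^{i-1}}`. -/
noncomputable def gabidulin (Fq : Type*) [Field Fq] [Fintype Fq] {F : Type*} [Field F]
    [Algebra Fq F] {n : ℕ} (k : ℕ) (α : Fin n → F) : Submodule F (Fin n → F) :=
  LinearMap.range (Matrix.vecMulLinear
    (Matrix.of fun (i : Fin k) (j : Fin n) => α j ^ (Fintype.card Fq ^ (i : ℕ))))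

/-!
The dual of `G_{n,k}(α)` consists of the vectors orthogonal to the rows `(α_i^{q^j})_i`, `j < k`.
Take `γ ≠ 0` orthogonal to the first `n - 1` such rows and `β_i := γ_i^{q^{-(n-k-1)}}` (the
Frobenius is invertible on a finite field): raising `∑ α_i^{q^j} β_i^{q^h}` to the power
`q^{n-k-1-h}` gives `∑ α_i^{q^{j+n-k-1-h}} γ_i = 0`.

The rest is root counting. A `q`-linearized polynomial is `F_q`-linear, so if it vanishes at the
`α_i` it vanishes on their `F_q`-span, which has `q^n` elements; if its `q`-degree is `< n` it is
therefore zero. Hence the rows of a Moore matrix are independent and both codes have dimension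
`n - k`. For the independence of the `γ_i`: an `F_q`-relation `g` lies in `γ^⊥`, which by dimension
count is spanned by the first `n - 1` rows, so `g_i = P(α_i)` for a linearized `P` of `q`-degree
`< n - 1`. As the `g_i` lie in `F_q`, `P^q - P` vanishes on the span while its degree is `< q^n`,
so `P^q = P`, which forces `P = 0`.
-/

open Polynomial Module Matrix

section DualCode

variable {F : Type*} [Field F] {n : ℕ}

theorem mem_dualCode {C : Submodule F (Fin n → F)} {u : Fin n → F} :
    u ∈ dualCode C ↔ ∀ v ∈ C, v ⬝ᵥ u = 0 := by
  simp [dualCode, Submodule.mem_iInf, dotFunctional, dotProduct]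

theorem dualCode_eq_orthogonal (C : Submodule F (Fin n → F)) :
    dualCode C = LinearMap.BilinForm.orthogonal (dotProductBilin F F) C := by
  ext u
  simp [mem_dualCode, LinearMap.BilinForm.mem_orthogonal_iff]

theorem le_dualCode_comm {C D : Submodule F (Fin n → F)} : C ≤ dualCode D ↔ D ≤ dualCode C := by
  simp only [SetLike.le_def, mem_dualCode]
  exact ⟨fun h v hv u hu => dotProduct_comm u v ▸ h hu v hv,
    fun h u hu v hv => dotProduct_comm v u ▸ h hv u hu⟩

theorem mem_dualCode_span {s : Set (Fin n → F)} {u : Fin n → F} :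
    u ∈ dualCode (Submodule.span F s) ↔ ∀ v ∈ s, v ⬝ᵥ u = 0 := by
  refine ⟨fun h v hv => mem_dualCode.1 h v (Submodule.subset_span hv), fun h => ?_⟩
  have : Submodule.span F s ≤ LinearMap.ker ((dotProductBilin F F).flip u) :=
    Submodule.span_le.2 h
  exact mem_dualCode.2 fun v hv => this hv

theorem nondegenerate_dotProductBilin :
    (dotProductBilin F F : LinearMap.BilinForm F (Fin n → F)).Nondegenerate :=
  ⟨fun _ hv => dotProduct_eq_zero_iff.1 hv,
    fun v hv => dotProduct_eq_zero_iff.1 fun w => dotProduct_comm v w ▸ hv w⟩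

theorem finrank_dualCode (C : Submodule F (Fin n → F)) :
    finrank F (dualCode C) = n - finrank F C := by
  rw [dualCode_eq_orthogonal, LinearMap.BilinForm.finrank_orthogonal nondegenerate_dotProductBilin,
    finrank_fin_fun]

end DualCode

def mooreMatrix (q k : ℕ) {R : Type*} [Monoid R] {n : ℕ} (α : Fin n → R) :
    Matrix (Fin k) (Fin n) R :=
  Matrix.of fun i j => α j ^ q ^ (i : ℕ)

section LinearizedPoly

variable {F : Type*} [Field F] {k : ℕ}

noncomputable def linearizedPoly (q : ℕ) (c : Fin k → F) : F[X] :=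
  ∑ i, C (c i) * X ^ q ^ (i : ℕ)

theorem eval_linearizedPoly (q : ℕ) (c : Fin k → F) (x : F) :
    (linearizedPoly q c).eval x = ∑ i, c i * x ^ q ^ (i : ℕ) := by
  simp [linearizedPoly, eval_finsetSum]

theorem natDegree_linearizedPoly_lt {q : ℕ} (hq : 1 < q) (c : Fin k → F) :
    (linearizedPoly q c).natDegree < q ^ k := by
  rcases k.eq_zero_or_pos with rfl | hk
  · simp [linearizedPoly]
  refine (natDegree_sum_le_of_forall_le _ _ fun i _ => ?_).trans_lt
    (Nat.pow_lt_pow_right hq (Nat.sub_lt hk one_pos))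
  exact (natDegree_C_mul_X_pow_le _ _).trans (Nat.pow_le_pow_right (by omega) (by omega))

theorem eq_zero_of_linearizedPoly_eq_zero {q : ℕ} (hq : 1 < q) {c : Fin k → F}
    (h : linearizedPoly q c = 0) : c = 0 := by
  have hli := (basisMonomials F).linearIndependent.comp (fun i : Fin k => q ^ (i : ℕ))
    ((Nat.pow_right_injective hq).comp Fin.val_injective)
  funext i
  refine Fintype.linearIndependent_iff.1 hli c ?_ i
  simpa [linearizedPoly, C_mul_X_pow_eq_monomial, smul_monomial] using h

theorem vecMul_mooreMatrix {n : ℕ} (q : ℕ) (α : Fin n → F) (c : Fin k → F) :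
    c ᵥ* mooreMatrix q k α = fun j => (linearizedPoly q c).eval (α j) := by
  ext j
  simp [vecMul, dotProduct, mooreMatrix, eval_linearizedPoly]

end LinearizedPoly

section FiniteField

variable {Fq F : Type*} [Field Fq] [Fintype Fq] [Field F] [Algebra Fq F] {n k : ℕ}

local notation "q" => Fintype.card Fq

theorem frobeniusAlgHom_pow_apply (s : ℕ) (x : F) :
    (FiniteField.frobeniusAlgHom Fq F ^ s) x = x ^ q ^ s := by
  rw [AlgHom.coe_pow, FiniteField.coe_frobeniusAlgHom, pow_iterate]

theorem frobeniusAlgEquivOfAlgebraic_pow_apply [Algebra.IsAlgebraic Fq F] (s : ℕ) (x : F) :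
    (FiniteField.frobeniusAlgEquivOfAlgebraic Fq F ^ s) x = x ^ q ^ s := by
  rw [AlgEquiv.coe_pow, FiniteField.coe_frobeniusAlgEquivOfAlgebraic_iterate]

variable (Fq) in
noncomputable def linearizedEval (c : Fin k → F) : F →ₗ[Fq] F :=
  ∑ i, c i • (FiniteField.frobeniusAlgHom Fq F ^ (i : ℕ)).toLinearMap

theorem linearizedEval_apply (c : Fin k → F) (x : F) :
    linearizedEval Fq c x = (linearizedPoly q c).eval x := by
  simp [linearizedEval, eval_linearizedPoly, FiniteField.coe_frobeniusAlgHom, pow_iterate]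

theorem eq_zero_of_forall_mem_span_eval_eq_zero {α : Fin n → F} (hα : LinearIndependent Fq α)
    {P : F[X]} (hdeg : P.natDegree < q ^ n)
    (hP : ∀ x ∈ Submodule.span Fq (Set.range α), P.eval x = 0) : P = 0 := by
  let S := Submodule.span Fq (Set.range α)
  have : Module.Finite Fq S := Module.Finite.span_of_finite Fq (Set.finite_range α)
  have : Finite S := Module.finite_of_finite Fq
  have : Fintype S := Fintype.ofFinite S
  refine eq_zero_of_natDegree_lt_card_of_eval_eq_zero P Subtype.val_injective
    (fun x : S => hP x x.2) ?_
  rwa [Module.card_eq_pow_finrank (K := Fq), finrank_span_eq_card hα, Fintype.card_fin]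

theorem eval_linearizedPoly_mem_of_mem_span {α : Fin n → F} {c : Fin k → F}
    {S : Submodule Fq F} (h : ∀ j, (linearizedPoly q c).eval (α j) ∈ S) :
    ∀ x ∈ Submodule.span Fq (Set.range α), (linearizedPoly q c).eval x ∈ S := by
  have : Submodule.span Fq (Set.range α) ≤ S.comap (linearizedEval Fq c) := by
    rw [Submodule.span_le]
    rintro _ ⟨j, rfl⟩
    simpa [linearizedEval_apply] using h j
  exact fun x hx => by simpa [linearizedEval_apply] using this hx

theorem eq_zero_of_forall_eval_linearizedPoly_eq_zero {α : Fin n → F}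
    (hα : LinearIndependent Fq α) (hkn : k ≤ n) {c : Fin k → F}
    (h : ∀ j, (linearizedPoly q c).eval (α j) = 0) : c = 0 := by
  have hq : 1 < q := Fintype.one_lt_card
  refine eq_zero_of_linearizedPoly_eq_zero hq (eq_zero_of_forall_mem_span_eval_eq_zero hα
    ((natDegree_linearizedPoly_lt hq c).trans_le (Nat.pow_le_pow_right (by omega) hkn)) ?_)
  exact eval_linearizedPoly_mem_of_mem_span (S := ⊥) (by simpa using h)

theorem eq_zero_of_forall_eval_linearizedPoly_mem_range {α : Fin n → F}
    (hα : LinearIndependent Fq α) (hkn : k < n) {c : Fin k → F}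
    (h : ∀ j, (linearizedPoly q c).eval (α j) ∈ Set.range (algebraMap Fq F)) : c = 0 := by
  have hq : 1 < q := Fintype.one_lt_card
  have hfix : linearizedPoly q c ^ q - linearizedPoly q c = 0 := by
    refine eq_zero_of_forall_mem_span_eval_eq_zero hα ?_ fun x hx => ?_
    · calc (linearizedPoly q c ^ q - linearizedPoly q c).natDegree
          ≤ q * (linearizedPoly q c).natDegree :=
            (natDegree_sub_le_of_le natDegree_pow_le
              (Nat.le_mul_of_pos_left _ (by omega))).trans_eq (max_self _)
        _ < q * q ^ k := by gcongr; exact natDegree_linearizedPoly_lt hq c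
        _ ≤ q ^ n := (pow_succ' q k).symm.trans_le (Nat.pow_le_pow_right (by omega) hkn)
    · obtain ⟨a, ha⟩ := eval_linearizedPoly_mem_of_mem_span
        (S := LinearMap.range (Algebra.linearMap Fq F)) h x hx
      rw [eval_sub, eval_pow, ← ha, Algebra.linearMap_apply, ← map_pow, FiniteField.pow_card,
        sub_self]
  have hdeg : (linearizedPoly q c).natDegree = 0 := by
    have := congrArg natDegree (sub_eq_zero.1 hfix)
    rw [natDegree_pow] at this
    nlinarith
  refine eq_zero_of_linearizedPoly_eq_zero hq ?_
  rw [eq_C_of_natDegree_eq_zero hdeg, coeff_zero_eq_eval_zero, eval_linearizedPoly]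
  simp

theorem gabidulin_eq_range (k : ℕ) (α : Fin n → F) :
    gabidulin Fq k α = LinearMap.range (mooreMatrix q k α).vecMulLinear :=
  rfl

theorem gabidulin_eq_span (k : ℕ) (α : Fin n → F) :
    gabidulin Fq k α = Submodule.span F (Set.range (mooreMatrix q k α).row) :=
  range_vecMulLinear _

theorem mem_gabidulin_iff {α v : Fin n → F} :
    v ∈ gabidulin Fq k α ↔ ∃ c : Fin k → F, ∀ j, (linearizedPoly q c).eval (α j) = v j := by
  simp [gabidulin_eq_range, vecMul_mooreMatrix, funext_iff]

theorem finrank_gabidulin {α : Fin n → F} (hα : LinearIndependent Fq α) (hkn : k ≤ n) :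
    finrank F (gabidulin Fq k α) = k := by
  have hinj : Function.Injective (mooreMatrix q k α).vecMulLinear := by
    refine (injective_iff_map_eq_zero _).2 fun c hc => ?_
    refine eq_zero_of_forall_eval_linearizedPoly_eq_zero hα hkn fun j => ?_
    simpa [vecMul_mooreMatrix] using congrFun hc j
  rw [gabidulin_eq_range, LinearMap.finrank_range_of_inj hinj, finrank_fin_fun]

theorem linearIndependent_of_mem_dualCode_gabidulin {α γ : Fin n → F}
    (hα : LinearIndependent Fq α) (hγ : γ ≠ 0) (hγα : γ ∈ dualCode (gabidulin Fq (n - 1) α)) :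
    LinearIndependent Fq γ := by
  have hn : n ≠ 0 := by rintro rfl; exact hγ (Subsingleton.elim _ _)
  have hperp : gabidulin Fq (n - 1) α = dualCode (F ∙ γ) := by
    refine Submodule.eq_of_le_of_finrank_eq
      (le_dualCode_comm.1 ((Submodule.span_singleton_le_iff_mem _ _).2 hγα)) ?_
    rw [finrank_gabidulin hα (n.sub_le 1), finrank_dualCode, finrank_span_singleton hγ]
  rw [Fintype.linearIndependent_iff]
  intro g hg
  have hmem : (fun i => algebraMap Fq F (g i)) ∈ gabidulin Fq (n - 1) α := by
    rw [hperp, mem_dualCode_span]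
    rintro _ rfl
    simpa [dotProduct, Algebra.smul_def, mul_comm] using hg
  obtain ⟨c, hc⟩ := mem_gabidulin_iff.1 hmem
  have hc0 : c = 0 := eq_zero_of_forall_eval_linearizedPoly_mem_range hα (by omega)
    fun j => ⟨g j, (hc j).symm⟩
  intro i
  simpa [hc0, linearizedPoly] using (hc i).symm

theorem gabidulin_le_dualCode_of_forall_sum_eq_zero {l : ℕ} {α β : Fin n → F}
    (horth : ∀ (j : Fin k) (h : Fin l), ∑ i, α i ^ q ^ (j : ℕ) * β i ^ q ^ (h : ℕ) = 0) :
    gabidulin Fq l β ≤ dualCode (gabidulin Fq k α) := by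
  rw [gabidulin_eq_span, Submodule.span_le]
  rintro _ ⟨s, rfl⟩
  rw [SetLike.mem_coe, gabidulin_eq_span, mem_dualCode_span]
  rintro _ ⟨j, rfl⟩
  exact horth j s

theorem sum_pow_mul_pow_eq_zero_of_pow_eq {r t j h : ℕ} {α β γ : Fin n → F}
    (hγ : γ ∈ dualCode (gabidulin Fq r α)) (hβ : ∀ i, β i ^ q ^ t = γ i) (hh : h ≤ t)
    (hj : j + (t - h) < r) :
    ∑ i, α i ^ q ^ j * β i ^ q ^ h = 0 := by
  have hrow : mooreMatrix q r α ⟨j + (t - h), hj⟩ ∈ gabidulin Fq r α := by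
    rw [gabidulin_eq_span]
    exact Submodule.subset_span ⟨_, rfl⟩
  have key : (FiniteField.frobeniusAlgHom Fq F ^ (t - h)) (∑ i, α i ^ q ^ j * β i ^ q ^ h) = 0 := by
    rw [map_sum, ← mem_dualCode.1 hγ _ hrow]
    refine Finset.sum_congr rfl fun i _ => ?_
    rw [map_mul, frobeniusAlgHom_pow_apply, frobeniusAlgHom_pow_apply, ← pow_mul, ← pow_mul,
      ← pow_add, ← pow_add, add_comm h, Nat.sub_add_cancel hh, hβ]
    rfl
  rwa [frobeniusAlgHom_pow_apply, pow_eq_zero_iff (by positivity)] at key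

end FiniteField

theorem gabidulin_duality_general {Fq F : Type*} [Field Fq] [Fintype Fq] [Field F] [Algebra Fq F]
    [FiniteDimensional Fq F] {n k : ℕ} (hk : 1 ≤ k) (hkn : k ≤ n)
    (α : Fin n → F) (hα : LinearIndependent Fq α) :
    ∃ β : Fin n → F, β ≠ 0 ∧
      (∀ (j : Fin k) (h : Fin (n - k)),
        ∑ i, α i ^ (Fintype.card Fq ^ (j : ℕ)) * β i ^ (Fintype.card Fq ^ (h : ℕ)) = 0) ∧
      LinearIndependent Fq β ∧
      gabidulin Fq (n - k) β = dualCode (gabidulin Fq k α) := by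
  obtain ⟨γ, hγ, hγ0⟩ : ∃ γ ∈ dualCode (gabidulin Fq (n - 1) α), γ ≠ 0 := by
    refine Submodule.exists_mem_ne_zero_of_ne_bot fun h => ?_
    have := finrank_dualCode (gabidulin Fq (n - 1) α)
    rw [h, finrank_bot, finrank_gabidulin hα (n.sub_le 1)] at this
    omega
  set σ := (FiniteField.frobeniusAlgEquivOfAlgebraic Fq F ^ (n - k - 1)).symm
  have hσ : ∀ i, σ (γ i) ^ Fintype.card Fq ^ (n - k - 1) = γ i := fun i => by
    rw [← frobeniusAlgEquivOfAlgebraic_pow_apply, AlgEquiv.apply_symm_apply]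
  have horth : ∀ (j : Fin k) (h : Fin (n - k)),
      ∑ i, α i ^ Fintype.card Fq ^ (j : ℕ) * σ (γ i) ^ Fintype.card Fq ^ (h : ℕ) = 0 :=
    fun j h => sum_pow_mul_pow_eq_zero_of_pow_eq hγ hσ (by omega) (by omega)
  have hli : LinearIndependent Fq (σ ∘ γ) :=
    (linearIndependent_of_mem_dualCode_gabidulin hα hγ0 hγ).map' σ.toLinearMap
      (LinearMap.ker_eq_bot.2 σ.injective)
  refine ⟨σ ∘ γ, fun h => hli.ne_zero ⟨0, by omega⟩ (congrFun h _), horth, hli, ?_⟩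
  refine Submodule.eq_of_le_of_finrank_eq (gabidulin_le_dualCode_of_forall_sum_eq_zero horth) ?_
  rw [finrank_gabidulin hli (n.sub_le k), finrank_dualCode, finrank_gabidulin hα hkn]

/-- Duality of Gabidulin codes: for `1 ≤ k ≤ n ≤ m = [F_{q^m} : F_q]` and
`α_1, …, α_n ∈ F_{q^m}` linearly independent over `F_q`, there is a nonzero
`β = (β_1, …, β_n)` with `∑ i, α_i^{q^{j-1}} β_i^{q^{h-1}} = 0` for all `j ∈ [k]`,
`h ∈ [n-k]`; moreover `β_1, …, β_n` are linearly independent over `F_q` and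
`G_{n,n-k}(β_1, …, β_n)` is the dual code of `G_{n,k}(α_1, …, α_n)`. -/
theorem gabidulin_duality {Fq F : Type*} [Field Fq] [Fintype Fq] [Field F] [Algebra Fq F]
    [FiniteDimensional Fq F] {n k : ℕ} (hk : 1 ≤ k) (hkn : k ≤ n)
    (hnm : n ≤ Module.finrank Fq F) (α : Fin n → F) (hα : LinearIndependent Fq α) :
    ∃ β : Fin n → F, β ≠ 0 ∧
      (∀ (j : Fin k) (h : Fin (n - k)),
        ∑ i, α i ^ (Fintype.card Fq ^ (j : ℕ)) * β i ^ (Fintype.card Fq ^ (h : ℕ)) = 0) ∧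
      LinearIndependent Fq β ∧
      gabidulin Fq (n - k) β = dualCode (gabidulin Fq k α) :=
  gabidulin_duality_general hk hkn α hα
end
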